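/- arXiv:1407.3320 — 7 statements merged into one kernel-verified Lean document; each statement's English description precedes it below -/
import Mathlib

section
/- Let $\oplus_{n\geq 0} I_n$ be a Noetherian non-negatively graded ring, where the $I_n$ form a decreasing chain of ideals in the Noetherian ring $R = I_0$ with $I_m I_n \subseteq I_{m+n}$. Then there exists an integer $l \geq 1$ such that for all $n \geq 1$, $(I_l)^n = I_{ln}$. -/
/-- The graded ring `⊕ₙ Iₙ` associated to a multiplicative decreasing filtration of
ideals of `R` with `I 0 = R`, realized as the subalgebra of `R[X]` consisting of the
polynomials whose `n`-th coefficient lies in `I n`. -/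
def filtRees (R : Type*) [CommRing R] (I : ℕ → Ideal R)
    (hmul : ∀ m n, I m * I n ≤ I (m + n)) (h0 : I 0 = ⊤) :
    Subalgebra R (Polynomial R) where
  carrier := {p | ∀ n, p.coeff n ∈ I n}
  add_mem' := fun {p q} hp hq n => by
    simpa [Polynomial.coeff_add] using (I n).add_mem (hp n) (hq n)
  mul_mem' := fun {p q} hp hq n => by
    rw [Polynomial.coeff_mul]
    refine Submodule.sum_mem _ fun c hc => ?_
    replace hc : c.1 + c.2 = n := by
      first
        | exact Finset.mem_antidiagonal.mp hc
        | exact Finset.Nat.mem_antidiagonal.mp hc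
        | simpa using hc
    have h := Ideal.mul_mem_mul (hp c.1) (hq c.2)
    exact hc ▸ hmul c.1 c.2 h
  algebraMap_mem' := fun r n => by
    rcases Nat.eq_zero_or_pos n with h | h
    · subst h
      simp [h0]
    · simp [Polynomial.coeff_C, Nat.pos_iff_ne_zero.mp h]

/-! Since `filtRees R I hmul h0` is Noetherian, its irrelevant ideal is generated by finitely
many homogeneous elements `aᵢ X^dᵢ` with `dᵢ ≥ 1`, and then every `I m` is generated by the
monomials `∏ aᵢ ^ eᵢ` with `∑ dᵢ eᵢ = m`. Let `D = ∏ dᵢ` and let `k` be the number of generators.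
By pigeonhole, a monomial of degree `D + m` with `m ≥ k D` has a factor `aᵢ ^ eᵢ` with
`dᵢ eᵢ ≥ D`, from which `aᵢ ^ (D / dᵢ) ∈ I D` splits off; so `I (D + m) ⊆ I D * I m` for
`m ≥ k D`. Iterating, `l = D (k D + 1)` satisfies `I (l + m) ⊆ I l * I m` for `m ≥ l`, and
`I l ^ n = I (l n)` follows by induction on `n`. -/

open Polynomial

section Filtration

variable {R : Type*} [CommRing R] {I : ℕ → Ideal R}

theorem filtration_pow_le (hmul : ∀ m n, I m * I n ≤ I (m + n)) (h0 : I 0 = ⊤) (m : ℕ) :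
    ∀ n, I m ^ n ≤ I (m * n)
  | 0 => by simp [h0]
  | n + 1 => by
    rw [pow_succ, Nat.mul_succ]
    exact (Ideal.mul_mono_left (filtration_pow_le hmul h0 m n)).trans (hmul _ _)

theorem filtration_add_mul_le_pow_mul {D M : ℕ} (h : ∀ m, M ≤ m → I (D + m) ≤ I D * I m) :
    ∀ j m, M ≤ m → I (D * j + m) ≤ I D ^ j * I m
  | 0, m, _ => by simp
  | j + 1, m, hm => by
    calc I (D * (j + 1) + m) = I (D + (D * j + m)) := by ring_nf
      _ ≤ I D * I (D * j + m) := h _ (by omega)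
      _ ≤ I D * (I D ^ j * I m) :=
        Ideal.mul_mono_right (filtration_add_mul_le_pow_mul h j m hm)
      _ = I D ^ (j + 1) * I m := by ring

theorem filtration_pow_eq_of_add_le_mul (hmul : ∀ m n, I m * I n ≤ I (m + n)) (h0 : I 0 = ⊤)
    {l : ℕ} (hl : ∀ m, l ≤ m → I (l + m) ≤ I l * I m) :
    ∀ n, 1 ≤ n → I l ^ n = I (l * n) := by
  refine Nat.le_induction (by simp) fun n hn ih => ?_
  refine le_antisymm (filtration_pow_le hmul h0 l _) ?_
  calc I (l * (n + 1)) = I (l + l * n) := by ring_nf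
    _ ≤ I l * I (l * n) := hl _ (Nat.le_mul_of_pos_right l hn)
    _ = I l ^ (n + 1) := by rw [← ih, pow_succ']

theorem filtration_exists_pow_eq (hmul : ∀ m n, I m * I n ≤ I (m + n)) (h0 : I 0 = ⊤)
    {D M : ℕ} (hD : 0 < D) (h : ∀ m, M ≤ m → I (D + m) ≤ I D * I m) :
    ∃ l, 1 ≤ l ∧ ∀ n, 1 ≤ n → I l ^ n = I (l * n) := by
  have hM : M + 1 ≤ D * (M + 1) := Nat.le_mul_of_pos_left _ hD
  refine ⟨D * (M + 1), by omega, filtration_pow_eq_of_add_le_mul hmul h0 fun m hm => ?_⟩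
  calc I (D * (M + 1) + m) ≤ I D ^ (M + 1) * I m :=
        filtration_add_mul_le_pow_mul h _ _ (by omega)
    _ ≤ I (D * (M + 1)) * I m := Ideal.mul_mono_left (filtration_pow_le hmul h0 D _)

theorem filtration_prod_le (hmul : ∀ m n, I m * I n ≤ I (m + n)) (h0 : I 0 = ⊤)
    {ι : Type*} (s : Finset ι) (f : ι → ℕ) : ∏ i ∈ s, I (f i) ≤ I (∑ i ∈ s, f i) := by
  classical
  induction s using Finset.induction_on with
  | empty => simp [h0]
  | insert i s hi ih =>
    rw [Finset.prod_insert hi, Finset.sum_insert hi]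
    exact (Ideal.mul_mono_right ih).trans (hmul _ _)

end Filtration

section Monomials

variable {R : Type*} [CommRing R] {ι : Type*} [Fintype ι]

def monomialSpan (d : ι → ℕ) (a : ι → R) (m : ℕ) : Ideal R :=
  Ideal.span {r | ∃ e : ι → ℕ, ∑ i, d i * e i = m ∧ ∏ i, a i ^ e i = r}

variable (d : ι → ℕ) (a : ι → R)

theorem monomialSpan_zero : monomialSpan d a 0 = ⊤ :=
  (Ideal.eq_top_iff_one _).2 (Ideal.subset_span ⟨0, by simp, by simp⟩)

theorem mem_monomialSpan_self (i : ι) : a i ∈ monomialSpan d a (d i) := by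
  classical
  exact Ideal.subset_span ⟨Pi.single i 1, by simp [Pi.single_apply], by simp [Pi.single_apply]⟩

theorem monomialSpan_mul_le (m m' : ℕ) :
    monomialSpan d a m * monomialSpan d a m' ≤ monomialSpan d a (m + m') := by
  rw [monomialSpan, monomialSpan, Ideal.span_mul_span']
  refine Ideal.span_mono ?_
  rintro _ ⟨_, ⟨e, rfl, rfl⟩, _, ⟨e', rfl, rfl⟩, rfl⟩
  exact ⟨e + e', by simp [mul_add, Finset.sum_add_distrib],
    by simp [pow_add, Finset.prod_mul_distrib]⟩

variable {d a} {I : ℕ → Ideal R}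

theorem prod_pow_mem_filtration (hmul : ∀ m n, I m * I n ≤ I (m + n)) (h0 : I 0 = ⊤)
    (ha : ∀ i, a i ∈ I (d i)) (e : ι → ℕ) : ∏ i, a i ^ e i ∈ I (∑ i, d i * e i) :=
  filtration_prod_le hmul h0 _ _ <| Ideal.prod_mem_prod fun i _ =>
    filtration_pow_le hmul h0 (d i) (e i) (Ideal.pow_mem_pow (ha i) _)

theorem filtration_le_mul_of_le_monomialSpan (hmul : ∀ m n, I m * I n ≤ I (m + n))
    (h0 : I 0 = ⊤) (ha : ∀ i, a i ∈ I (d i)) {D m : ℕ} (hD : ∀ i, d i ∣ D)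
    (hm : Fintype.card ι * D < D + m) (hgen : I (D + m) ≤ monomialSpan d a (D + m)) :
    I (D + m) ≤ I D * I m := by
  classical
  refine hgen.trans (Ideal.span_le.2 ?_)
  rintro _ ⟨e, he, rfl⟩
  obtain ⟨i, -, hi⟩ := Finset.exists_lt_of_sum_lt (s := Finset.univ) (f := fun _ => D)
    (g := fun j => d j * e j) (by simpa [he] using hm)
  set q := D / d i
  have hq : d i * q = D := Nat.mul_div_cancel' (hD i)
  have hle : Pi.single i q ≤ e := fun j => by
    rcases eq_or_ne j i with rfl | hj
    · simpa using Nat.div_le_of_le_mul hi.le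
    · simp [hj]
  obtain ⟨f, rfl⟩ := exists_add_of_le hle
  have hdeg : ∑ j, d j * f j = m := by
    simp [mul_add, Finset.sum_add_distrib, Pi.single_apply, hq] at he
    omega
  have hsplit : ∏ j, a j ^ (Pi.single i q + f : ι → ℕ) j = a i ^ q * ∏ j, a j ^ f j := by
    simp only [Pi.add_apply, pow_add, Finset.prod_mul_distrib]
    congr 1
    exact (Fintype.prod_eq_single i fun j hj => by simp [hj]).trans (by simp)
  rw [hsplit]
  exact Ideal.mul_mem_mul (hq ▸ filtration_pow_le hmul h0 _ _ (Ideal.pow_mem_pow (ha i) q))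
    (hdeg ▸ prod_pow_mem_filtration hmul h0 ha f)

end Monomials

theorem Polynomial.eq_sum_monomial_succ_of_coeff_zero {R : Type*} [Semiring R] {p : R[X]}
    (hp : p.coeff 0 = 0) {N : ℕ} (hN : p.natDegree ≤ N) :
    p = ∑ n : Fin N, monomial (n + 1) (p.coeff (n + 1)) := by
  conv_lhs => rw [p.as_sum_range' (N + 1) (Nat.lt_succ_of_le hN), Finset.sum_range_succ']
  simp [hp, Fin.sum_univ_eq_sum_range (fun n => monomial (n + 1) (p.coeff (n + 1)))]

namespace filtRees

universe u

variable {R : Type u} [CommRing R] {I : ℕ → Ideal R} {hmul : ∀ m n, I m * I n ≤ I (m + n)}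
  {h0 : I 0 = ⊤}

noncomputable def monomial (n : ℕ) (a : R) (ha : a ∈ I n) : filtRees R I hmul h0 :=
  ⟨Polynomial.monomial n a, fun k => by
    rw [coeff_monomial]
    split_ifs with h
    exacts [h ▸ ha, zero_mem _]⟩

@[simp]
theorem coe_monomial (n : ℕ) (a : R) (ha : a ∈ I n) :
    (monomial n a ha : filtRees R I hmul h0) = Polynomial.monomial n a :=
  rfl

variable (I hmul h0) in
noncomputable def irrelevant : Ideal (filtRees R I hmul h0) :=
  RingHom.ker (constantCoeff.comp (filtRees R I hmul h0).val.toRingHom)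

theorem mem_irrelevant {p : filtRees R I hmul h0} :
    p ∈ irrelevant I hmul h0 ↔ (p : R[X]).coeff 0 = 0 := by
  simp [irrelevant, RingHom.mem_ker]

theorem exists_monomial_generators [IsNoetherianRing (filtRees R I hmul h0)] :
    ∃ (ι : Type u) (_ : Fintype ι) (d : ι → ℕ) (a : ι → R) (ha : ∀ i, a i ∈ I (d i)),
      (∀ i, 0 < d i) ∧
        irrelevant I hmul h0 ≤ Ideal.span (Set.range fun i => monomial (d i) (a i) (ha i)) := by
  -- the homogeneous components of a finite generating set of the irrelevant ideal
  obtain ⟨T, hT⟩ := IsNoetherian.noetherian (irrelevant I hmul h0)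
  set N := T.sup fun t => (t : R[X]).natDegree
  refine ⟨T × Fin N, inferInstance, fun i => i.2 + 1, fun i => (i.1 : R[X]).coeff (i.2 + 1),
    fun i => i.1.1.2 _, fun i => Nat.succ_pos _, ?_⟩
  rw [← hT, Ideal.span_le]
  intro t ht
  have ht0 : (t : R[X]).coeff 0 = 0 := mem_irrelevant.1 (hT ▸ Ideal.subset_span ht)
  have htN : (t : R[X]).natDegree ≤ N :=
    Finset.le_sup (f := fun s : filtRees R I hmul h0 => (s : R[X]).natDegree) ht
  have ht_eq : t = ∑ n : Fin N, monomial (n + 1) _ (t.2 (n + 1)) :=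
    Subtype.ext (by simpa using eq_sum_monomial_succ_of_coeff_zero ht0 htN)
  rw [ht_eq]
  exact sum_mem fun n _ => Ideal.subset_span ⟨(⟨t, ht⟩, n), rfl⟩

theorem le_monomialSpan_of_irrelevant_le_span {ι : Type*} [Fintype ι] {d : ι → ℕ} {a : ι → R}
    (ha : ∀ i, a i ∈ I (d i)) (hd : ∀ i, 0 < d i)
    (hspan : irrelevant I hmul h0 ≤ Ideal.span (Set.range fun i => monomial (d i) (a i) (ha i)))
    (m : ℕ) : I m ≤ monomialSpan d a m := by
  induction m using Nat.strong_induction_on with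
  | _ m ih =>
  rcases Nat.eq_zero_or_pos m with rfl | hm
  · simp [monomialSpan_zero]
  intro x hx
  have hx_mem : monomial m x hx ∈ irrelevant I hmul h0 := by
    simp [mem_irrelevant, coeff_monomial, hm.ne']
  obtain ⟨c, hc⟩ := (Submodule.mem_span_range_iff_exists_fun _).1 (hspan hx_mem)
  -- compare the coefficients of `X ^ m` in `x X ^ m = ∑ cᵢ aᵢ X ^ dᵢ`
  have hx_eq : x = ∑ i, if d i ≤ m then (c i : R[X]).coeff (m - d i) * a i else 0 := by
    have := congrArg (fun p : filtRees R I hmul h0 => (p : R[X]).coeff m) hc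
    simpa [← C_mul_X_pow_eq_monomial, ← mul_assoc, coeff_mul_X_pow', coeff_mul_C] using this.symm
  rw [hx_eq]
  refine sum_mem fun i _ => ?_
  split_ifs with hi
  · have hmul_mem := monomialSpan_mul_le d a _ _ <|
      Ideal.mul_mem_mul (ih (m - d i) (by have := hd i; omega) ((c i).2 _))
        (mem_monomialSpan_self d a i)
    rwa [Nat.sub_add_cancel hi] at hmul_mem
  · exact zero_mem _

end filtRees

theorem filtration_power_stabilizes_general {R : Type*} [CommRing R]
    (I : ℕ → Ideal R)
    (hmul : ∀ m n, I m * I n ≤ I (m + n)) (h0 : I 0 = ⊤)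
    (hS : IsNoetherianRing (filtRees R I hmul h0)) :
    ∃ l : ℕ, 1 ≤ l ∧ ∀ n : ℕ, 1 ≤ n → I l ^ n = I (l * n) := by
  obtain ⟨ι, _, d, a, ha, hd, hspan⟩ :=
    filtRees.exists_monomial_generators (hmul := hmul) (h0 := h0)
  have hgen := filtRees.le_monomialSpan_of_irrelevant_le_span ha hd hspan
  set D := ∏ i, d i
  have hD : 0 < D := Finset.prod_pos fun i _ => hd i
  exact filtration_exists_pow_eq hmul h0 hD (M := Fintype.card ι * D) fun m hm =>
    filtration_le_mul_of_le_monomialSpan hmul h0 ha (fun i => Finset.dvd_prod_of_mem d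
      (Finset.mem_univ i)) (by omega) (hgen _)

/-- If `⊕ₙ Iₙ` is a Noetherian non-negatively graded ring, where the `Iₙ`
form a decreasing chain of ideals of the Noetherian ring `R = I₀` with `Iₘ Iₙ ⊆ I_{m+n}`,
then there is `l ≥ 1` with `(I l)ⁿ = I (l * n)` for all `n ≥ 1`. -/
theorem filtration_power_stabilizes {R : Type*} [CommRing R] [IsNoetherianRing R]
    (I : ℕ → Ideal R) (hdec : ∀ n, I (n + 1) ≤ I n)
    (hmul : ∀ m n, I m * I n ≤ I (m + n)) (h0 : I 0 = ⊤)
    (hS : IsNoetherianRing (filtRees R I hmul h0)) :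
    ∃ l : ℕ, 1 ≤ l ∧ ∀ n : ℕ, 1 ≤ n → I l ^ n = I (l * n) :=
  filtration_power_stabilizes_general I hmul h0 hS
end

section
/- Let $R$ be a Noetherian ring, $I$ an ideal, and $M$ a finitely generated $R$-module with a filtration $M = M_0 \supseteq M_1 \supseteq \cdots$ satisfying $I M_n \subseteq M_{n+1}$ for all $n$ and such that $\oplus_n M_n$ is a finitely generated module over the Rees ring $\oplus_n I^n$. Then the filtrations $\{M_n\}$ and $\{I^n M\}$ are cofinal: for every $k$ there exists $n$ such that $M_n \subseteq I^k M$. -/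
universe u

theorem Ideal.Filtration.Stable.exists_le_pow_smul_top {R M : Type*} [CommRing R]
    [AddCommGroup M] [Module R M] {I : Ideal R} {F : I.Filtration M} (hF : F.Stable) (k : ℕ) :
    ∃ n, F.N n ≤ I ^ k • (⊤ : Submodule R M) := by
  obtain ⟨n₀, hn₀⟩ := hF.exists_pow_smul_eq
  exact ⟨n₀ + k, (hn₀ k).trans_le (Submodule.smul_mono le_rfl le_top)⟩

theorem filtration_cofinal_general {R M : Type u} [CommRing R] [IsNoetherianRing R]
    [AddCommGroup M] [Module R M] [Module.Finite R M]
    (I : Ideal R) (F : I.Filtration M)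
    (hFG : F.submodule.FG) :
    ∀ k : ℕ, ∃ n : ℕ, F.N n ≤ I ^ k • (⊤ : Submodule R M) :=
  ((F.submodule_fg_iff_stable fun _ => IsNoetherian.noetherian _).mp hFG).exists_le_pow_smul_top

/-- Let `R` be Noetherian, `I` an ideal, and `M` a finitely generated
`R`-module with a filtration `M = M₀ ⊇ M₁ ⊇ ⋯` satisfying `I Mₙ ⊆ Mₙ₊₁` and such that
`⊕ₙ Mₙ` is a finitely generated module over the Rees ring `⊕ₙ Iⁿ`.  Then the filtrations
`{Mₙ}` and `{Iⁿ M}` are cofinal: for every `k` there is `n` with `Mₙ ⊆ Iᵏ M`. -/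
theorem filtration_cofinal {R M : Type u} [CommRing R] [IsNoetherianRing R]
    [AddCommGroup M] [Module R M] [Module.Finite R M]
    (I : Ideal R) (F : I.Filtration M) (hF0 : F.N 0 = ⊤)
    (hFG : F.submodule.FG) :
    ∀ k : ℕ, ∃ n : ℕ, F.N n ≤ I ^ k • (⊤ : Submodule R M) :=
  filtration_cofinal_general I F hFG
end

section
/- Let $R$ be a Noetherian ring, $I$ an ideal, and $M$ an $I$-filtered module. Then there exists a finite set $\Lambda$ of prime ideals of $R$ such that for every $n$, the quotient $M/M_n$ admits a prime filtration all of whose prime factors belong to $\Lambda$. -/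
/-!
Over the Rees algebra `A = ⊕ₖ Iᵏ tᵏ` of the Noetherian ring `R`, `⊕ₙ Mₙ tⁿ` is a finitely
generated graded module, so its graded submodules satisfy the ascending chain condition.
Enlarging a graded submodule `D` by a homogeneous element `y tᵃ` adds, in degree `a + k`, a
quotient isomorphic to `(A ⧸ (D : y tᵃ))ₖ`. By Noetherian induction it is therefore enough to
find, for each graded ideal `Q`, one finite set of primes serving all pieces `Iᵏ / Qₖ`.
For that, pick `y tᵃ ∉ Q` with `P = (Q : y tᵃ)` maximal. Then `P` is a graded prime ideal and
`P₀` is a prime of `R`. If `x ∈ I \ P₁`, multiplication by `x t` embeds `(A ⧸ P)ₖ` into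
`(A ⧸ P)ₖ₊₁` with cokernel `(A ⧸ (P + x t A))ₖ₊₁`, and `P + x t A ⊋ Q`. So the pieces of
`A ⧸ P` need only `P₀` and the primes of the induction hypothesis. Applied to `Mₙ₊₁ ⊆ Mₙ`,
this gives one finite set of primes for all `Mₙ / Mₙ₊₁`, and these quotients splice to `M ⧸ Mₙ`.
-/

universe u

/-- `HasPrimeFiltrationIn R M Λ` says that the `R`-module `M` admits a prime filtration
`0 = M₀ ⊆ M₁ ⊆ ⋯ ⊆ M_k = M` with each quotient `Mᵢ/Mᵢ₋₁` isomorphic to `R ⧸ P` for some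
prime ideal `P ∈ Λ`. -/
def HasPrimeFiltrationIn (R : Type*) [CommRing R] (M : Type*) [AddCommGroup M]
    [Module R M] (Λ : Set (Ideal R)) : Prop :=
  ∃ (k : ℕ) (f : Fin (k + 1) → Submodule R M), Monotone f ∧ f 0 = ⊥ ∧ f (Fin.last k) = ⊤ ∧
    ∀ i : Fin k, ∃ P ∈ Λ, P.IsPrime ∧
      Nonempty ((↥(f i.succ) ⧸ Submodule.comap (f i.succ).subtype (f i.castSucc)) ≃ₗ[R]
        (R ⧸ P))

section PrimeChains

variable {R M M' : Type*} [CommRing R] [AddCommGroup M] [Module R M] [AddCommGroup M']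
  [Module R M']

namespace Submodule

theorem nonempty_quotient_map_sup_equiv (φ : M →ₗ[R] M') (N : Submodule R M')
    {C₁ C₂ : Submodule R M} (h : C₁ ≤ C₂) (hker : N.comap φ ⊓ C₂ ≤ C₁) :
    Nonempty ((↥(C₂.map φ ⊔ N) ⧸ (C₁.map φ ⊔ N).submoduleOf (C₂.map φ ⊔ N)) ≃ₗ[R]
      (↥C₂ ⧸ C₁.submoduleOf C₂)) := by
  let ψ : C₂ →ₗ[R] ↥(C₂.map φ ⊔ N) ⧸ (C₁.map φ ⊔ N).submoduleOf (C₂.map φ ⊔ N) :=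
    mkQ _ ∘ₗ φ.restrict fun _ hx => mem_sup_left (mem_map_of_mem hx)
  have hsurj : Function.Surjective ψ := by
    rintro ⟨w, hw⟩
    obtain ⟨_, ⟨c, hc, rfl⟩, n, hn, rfl⟩ := mem_sup.mp hw
    refine ⟨⟨c, hc⟩, (Quotient.eq _).mpr ?_⟩
    simpa [submoduleOf] using neg_mem (mem_sup_right hn)
  have hker' : LinearMap.ker ψ = C₁.submoduleOf C₂ := by
    ext ⟨x, hx⟩
    rw [LinearMap.mem_ker, LinearMap.comp_apply, mkQ_apply, Quotient.mk_eq_zero]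
    change φ x ∈ C₁.map φ ⊔ N ↔ x ∈ C₁
    refine ⟨fun hφx => ?_, fun hx₁ => mem_sup_left (mem_map_of_mem hx₁)⟩
    obtain ⟨_, ⟨c, hc, rfl⟩, n, hn, hcn⟩ := mem_sup.mp hφx
    have hxc : x - c ∈ N.comap φ ⊓ C₂ := ⟨by simpa [← hcn] using hn, sub_mem hx (h hc)⟩
    simpa using add_mem (hker hxc) hc
  exact ⟨((quotEquivOfEq _ _ hker').symm.trans (ψ.quotKerEquivOfSurjective hsurj)).symm⟩

variable (M) in
def primeQuotientRel (Λ : Set (Ideal R)) : SetRel (Submodule R M) (Submodule R M) :=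
  {N | N.1 ≤ N.2 ∧ ∃ P ∈ Λ, P.IsPrime ∧ Nonempty ((↥N.2 ⧸ N.1.submoduleOf N.2) ≃ₗ[R] R ⧸ P)}

theorem monotone_of_primeQuotientRel {Λ : Set (Ideal R)}
    (s : RelSeries (primeQuotientRel M Λ)) : Monotone s :=
  Fin.monotone_iff_le_succ.mpr fun i => (s.step i).1

def HasPrimeChain (Λ : Set (Ideal R)) (A B : Submodule R M) : Prop :=
  ∃ s : RelSeries (primeQuotientRel M Λ), s.head = A ∧ s.last = B

namespace HasPrimeChain

variable {Λ Λ' : Set (Ideal R)} {A B C : Submodule R M}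

protected theorem refl (Λ : Set (Ideal R)) (A : Submodule R M) : HasPrimeChain Λ A A :=
  ⟨RelSeries.singleton _ A, rfl, rfl⟩

theorem of_equiv {P : Ideal R} (h : A ≤ B) (hP : P ∈ Λ) (hp : P.IsPrime)
    (e : (↥B ⧸ A.submoduleOf B) ≃ₗ[R] R ⧸ P) : HasPrimeChain Λ A B :=
  ⟨(RelSeries.singleton _ A).snoc B (show A ≤ B ∧ _ from ⟨h, P, hP, hp, ⟨e⟩⟩), rfl,
    RelSeries.last_snoc ..⟩

protected theorem trans (h₁ : HasPrimeChain Λ A B) (h₂ : HasPrimeChain Λ B C) :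
    HasPrimeChain Λ A C := by
  obtain ⟨s, rfl, rfl⟩ := h₁
  obtain ⟨t, ht, rfl⟩ := h₂
  exact ⟨s.smash t ht.symm, by simp, by simp⟩

theorem mono (h : HasPrimeChain Λ A B) (hΛ : Λ ⊆ Λ') : HasPrimeChain Λ' A B := by
  obtain ⟨s, rfl, rfl⟩ := h
  exact ⟨s.ofLE fun _ ⟨hle, P, hP, hp, e⟩ => ⟨hle, P, hΛ hP, hp, e⟩, rfl, rfl⟩

theorem map_sup (h : HasPrimeChain Λ A B) (φ : M →ₗ[R] M') (N : Submodule R M')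
    (hker : N.comap φ ⊓ B ≤ A) : HasPrimeChain Λ (A.map φ ⊔ N) (B.map φ ⊔ N) := by
  obtain ⟨s, rfl, rfl⟩ := h
  have hs := monotone_of_primeQuotientRel s
  refine ⟨⟨s.length, fun i => (s i).map φ ⊔ N, fun i => ?_⟩, rfl, rfl⟩
  obtain ⟨hle, P, hP, hp, ⟨e⟩⟩ := s.step i
  obtain ⟨e'⟩ := nonempty_quotient_map_sup_equiv φ N hle
    ((inf_le_inf_left _ (hs (Fin.le_last _))).trans (hker.trans (hs (Fin.zero_le _))))
  exact ⟨sup_le_sup_right (map_mono hle) _, P, hP, hp, ⟨e'.trans e⟩⟩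

theorem of_forall_succ {N : ℕ → Submodule R M} (h : ∀ n, HasPrimeChain Λ (N (n + 1)) (N n)) :
    ∀ n, HasPrimeChain Λ (N n) (N 0)
  | 0 => .refl _ _
  | n + 1 => (h n).trans (of_forall_succ h n)

end HasPrimeChain

end Submodule

open Submodule

theorem hasPrimeFiltrationIn_of_hasPrimeChain {Λ : Set (Ideal R)}
    (h : HasPrimeChain Λ (⊥ : Submodule R M) ⊤) : HasPrimeFiltrationIn R M Λ := by
  obtain ⟨s, hs₀, hs₁⟩ := h
  refine ⟨s.length, s, monotone_of_primeQuotientRel s, hs₀, hs₁, fun i => ?_⟩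
  obtain ⟨-, P, hP, hp, e⟩ := s.step i
  exact ⟨P, hP, hp, e⟩

theorem hasPrimeFiltrationIn_quotient {Λ : Set (Ideal R)} {N : Submodule R M}
    (h : HasPrimeChain Λ N ⊤) : HasPrimeFiltrationIn R (M ⧸ N) Λ := by
  apply hasPrimeFiltrationIn_of_hasPrimeChain
  simpa using h.map_sup N.mkQ ⊥ (by simp)

end PrimeChains

/-- The graded submodule `⊕ₙ Nₙ tⁿ` of the Rees module `M[t]` over `reesAlgebra I`; unlike in an
`Ideal.Filtration`, the `Nₙ` need not decrease. For `M = R` and `Nₖ ≤ Iᵏ` these are the graded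
ideals of the Rees algebra. -/
@[ext]
structure GradedReesSubmodule {R : Type*} [CommRing R] (I : Ideal R) (M : Type*)
    [AddCommGroup M] [Module R M] where
  N : ℕ → Submodule R M
  smul_le : ∀ n, I • N n ≤ N (n + 1)

namespace GradedReesSubmodule

open Submodule PolynomialModule

variable {R M : Type*} [CommRing R] [AddCommGroup M] [Module R M] {I : Ideal R}
  {D E : GradedReesSubmodule I M}

instance : Max (GradedReesSubmodule I M) where
  max D E := ⟨fun n => D.N n ⊔ E.N n, fun n => by
    rw [smul_sup]
    exact sup_le_sup (D.smul_le n) (E.smul_le n)⟩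

instance : LE (GradedReesSubmodule I M) := ⟨fun D E => ∀ n, D.N n ≤ E.N n⟩

instance : LT (GradedReesSubmodule I M) := ⟨fun D E => D ≤ E ∧ ¬E ≤ D⟩

instance : SemilatticeSup (GradedReesSubmodule I M) :=
  Function.Injective.semilatticeSup N (fun _ _ => GradedReesSubmodule.ext) .rfl .rfl
    fun _ _ => rfl

theorem le_def : D ≤ E ↔ ∀ n, D.N n ≤ E.N n := Iff.rfl

@[simp] theorem sup_N (D E : GradedReesSubmodule I M) (n : ℕ) : (D ⊔ E).N n = D.N n ⊔ E.N n :=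
  rfl

theorem exists_mem_notMem_of_lt (h : D < E) : ∃ a, ∃ y ∈ E.N a, y ∉ D.N a := by
  simpa only [le_def, not_forall, SetLike.not_le_iff_exists] using h.not_ge

theorem pow_smul_le (D : GradedReesSubmodule I M) (i j : ℕ) : I ^ i • D.N j ≤ D.N (i + j) := by
  induction i with
  | zero => simp
  | succ i ih =>
    rw [pow_succ', mul_smul, Nat.add_right_comm]
    exact (smul_mono_right _ ih).trans (D.smul_le _)

def ofFiltration (F : I.Filtration M) : GradedReesSubmodule I M := ⟨F.N, F.smul_le⟩

def toSubmodule (D : GradedReesSubmodule I M) :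
    Submodule (reesAlgebra I) (PolynomialModule R M) where
  carrier := {f | ∀ i, f.coeff i ∈ D.N i}
  add_mem' hf hg i := add_mem (hf i) (hg i)
  zero_mem' _ := zero_mem _
  smul_mem' r f hf i := by
    rw [Subalgebra.smul_def, PolynomialModule.smul_apply]
    refine sum_mem fun ⟨j, k⟩ e => ?_
    rw [Finset.HasAntidiagonal.mem_antidiagonal] at e
    subst e
    exact D.pow_smul_le j k (smul_mem_smul (r.2 j) (hf k))

theorem toSubmodule_ofFiltration (F : I.Filtration M) :
    (ofFiltration F).toSubmodule = F.submodule := rfl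

theorem single_mem_toSubmodule {a : ℕ} {y : M} :
    single R a y ∈ D.toSubmodule ↔ y ∈ D.N a := by
  refine ⟨fun h => by simpa using h a, fun h i => ?_⟩
  rw [coeff_single, Finsupp.single_apply]
  split_ifs with hai
  · exact hai ▸ h
  · exact zero_mem _

theorem wellFounded_gt_Iic [IsNoetherianRing R] (T : GradedReesSubmodule I M)
    (hT : T.toSubmodule.FG) :
    WellFounded fun D₁ D₂ : GradedReesSubmodule I M => D₂ < D₁ ∧ D₁ ≤ T := by
  have : IsNoetherian (reesAlgebra I) T.toSubmodule := isNoetherian_of_fg_of_noetherian _ hT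
  let f (D : GradedReesSubmodule I M) := D.toSubmodule.comap T.toSubmodule.subtype
  refine Subrelation.wf (fun {D₁ D₂} ⟨hlt, hD₁⟩ => ?_) (InvImage.wf f wellFounded_gt)
  obtain ⟨a, y, hy₁, hy₂⟩ := exists_mem_notMem_of_lt hlt
  refine lt_of_le_not_ge (fun g hg i => hlt.le i (hg i)) fun hle => hy₂ ?_
  exact single_mem_toSubmodule.mp
    (hle (x := ⟨_, single_mem_toSubmodule.mpr (hD₁ a hy₁)⟩) (single_mem_toSubmodule.mpr hy₁))

/-- The graded submodule generated by `y tᵃ`. -/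
def spanSingleton (a : ℕ) (y : M) : GradedReesSubmodule I M where
  N n := if a ≤ n then Submodule.map (LinearMap.toSpanSingleton R M y) (I ^ (n - a)) else ⊥
  smul_le n := by
    split_ifs with h₁ h₂
    · rw [← map_smul'', Ideal.smul_eq_mul, ← pow_succ', Nat.sub_add_comm h₁]
    · omega
    · simp
    · simp

theorem spanSingleton_N_add (a k : ℕ) (y : M) :
    (spanSingleton (I := I) a y).N (a + k) =
      Submodule.map (LinearMap.toSpanSingleton R M y) (I ^ k) := by
  simp [spanSingleton]

theorem spanSingleton_N_of_lt {a n : ℕ} (y : M) (h : n < a) :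
    (spanSingleton (I := I) a y).N n = ⊥ :=
  if_neg (not_le.mpr h)

theorem mem_spanSingleton_self (a : ℕ) (y : M) : y ∈ (spanSingleton (I := I) a y).N a := by
  have h := spanSingleton_N_add (I := I) a 0 y
  rw [add_zero] at h
  rw [h]
  exact ⟨1, by simp, by simp⟩

theorem spanSingleton_le {a : ℕ} {y : M} (hy : y ∈ D.N a) : spanSingleton a y ≤ D := by
  intro n
  rcases lt_or_ge n a with h | h
  · rw [spanSingleton_N_of_lt y h]
    exact bot_le
  · obtain ⟨k, rfl⟩ := Nat.exists_eq_add_of_le h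
    rw [spanSingleton_N_add, map_le_iff_le_comap]
    intro r hr
    rw [mem_comap, LinearMap.toSpanSingleton_apply, add_comm]
    exact D.pow_smul_le k a (smul_mem_smul hr hy)

theorem lt_sup_spanSingleton {a : ℕ} {y : M} (hy : y ∉ D.N a) : D < D ⊔ spanSingleton a y :=
  lt_of_le_of_ne le_sup_left fun h => hy <| by
    rw [h]
    exact mem_sup_right (mem_spanSingleton_self a y)

/-- The graded ideal `(D : y tᵃ)` of the Rees algebra. -/
def colon (D : GradedReesSubmodule I M) (a : ℕ) (y : M) : GradedReesSubmodule I R where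
  N k := I ^ k ⊓ (D.N (a + k)).comap (LinearMap.toSpanSingleton R M y)
  smul_le k := Submodule.smul_le.mpr fun r hr s ⟨hs, hsy⟩ => by
    refine ⟨?_, ?_⟩
    · rw [pow_succ']
      exact Ideal.mul_mem_mul hr hs
    · change (r * s) • y ∈ D.N (a + k + 1)
      rw [mul_smul]
      exact D.smul_le (a + k) (smul_mem_smul hr (hsy : s • y ∈ D.N (a + k)))

theorem mem_colon {a k : ℕ} {y : M} {r : R} :
    r ∈ (D.colon a y).N k ↔ r ∈ I ^ k ∧ r • y ∈ D.N (a + k) :=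
  Iff.rfl

def adic (I : Ideal R) : GradedReesSubmodule I R where
  N k := I ^ k
  smul_le k := by rw [Ideal.smul_eq_mul, ← pow_succ']

theorem colon_le_adic (a : ℕ) (y : M) : D.colon a y ≤ adic I := fun _ => inf_le_left

theorem adic_toSubmodule_fg [IsNoetherianRing R] (I : Ideal R) : (adic I).toSubmodule.FG := by
  have : (adic I).toSubmodule = (I.stableFiltration ⊤).submodule := by
    ext f
    simp [toSubmodule, Ideal.Filtration.mem_submodule, adic]
  rw [this, Ideal.Filtration.submodule_fg_iff_stable _ fun _ => IsNoetherian.noetherian _]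
  exact I.stableFiltration_stable ⊤

theorem le_colon {Q : GradedReesSubmodule I R} (hQ : Q ≤ adic I) {a : ℕ} {y : R}
    (hy : y ∈ I ^ a) : Q ≤ Q.colon a y := fun k s hs =>
  mem_colon.mpr ⟨hQ k hs, by
    rw [smul_eq_mul, mul_comm]
    exact Q.pow_smul_le a k (smul_mem_smul hy hs)⟩

theorem colon_le_colon_smul {a b : ℕ} {x : R} (y : M) (hx : x ∈ I ^ b) :
    D.colon a y ≤ D.colon (a + b) (x • y) := fun k s hs => by
  obtain ⟨hs, hsy⟩ := mem_colon.mp hs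
  refine mem_colon.mpr ⟨hs, ?_⟩
  rw [smul_comm, show a + b + k = b + (a + k) by omega]
  exact D.pow_smul_le b (a + k) (smul_mem_smul hx hsy)

theorem colon_colon {a b : ℕ} {x : R} (y : M) (hx : x ∈ I ^ b) :
    (D.colon a y).colon b x = D.colon (a + b) (x • y) := by
  ext k s
  simp only [mem_colon, smul_eq_mul, mul_smul, add_assoc]
  refine ⟨fun ⟨hs, _, h⟩ => ⟨hs, h⟩, fun ⟨hs, h⟩ => ⟨hs, ?_, h⟩⟩
  rw [pow_add, mul_comm]
  exact Ideal.mul_mem_mul hs hx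

def HasUniformPrimeChains (D E : GradedReesSubmodule I M) : Prop :=
  ∃ Λ : Set (Ideal R), Λ.Finite ∧ ∀ n, HasPrimeChain Λ (D.N n) (E.N n)

namespace HasUniformPrimeChains

protected theorem refl (D : GradedReesSubmodule I M) : D.HasUniformPrimeChains D :=
  ⟨∅, Set.finite_empty, fun _ => .refl _ _⟩

protected theorem trans {D₁ D₂ D₃ : GradedReesSubmodule I M} (h₁ : D₁.HasUniformPrimeChains D₂)
    (h₂ : D₂.HasUniformPrimeChains D₃) : D₁.HasUniformPrimeChains D₃ := by
  obtain ⟨Λ₁, hΛ₁, h₁⟩ := h₁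
  obtain ⟨Λ₂, hΛ₂, h₂⟩ := h₂
  exact ⟨Λ₁ ∪ Λ₂, hΛ₁.union hΛ₂, fun n =>
    ((h₁ n).mono Set.subset_union_left).trans ((h₂ n).mono Set.subset_union_right)⟩

end HasUniformPrimeChains

/-- `r ↦ r • y` identifies `Iᵏ / (D : y tᵃ)ₖ` with the degree `a + k` part of `(D + A y tᵃ) / D`,
`A` the Rees algebra. -/
theorem hasPrimeChain_sup_spanSingleton {Λ : Set (Ideal R)} {a k : ℕ} {y : M}
    (h : HasPrimeChain Λ ((D.colon a y).N k) (I ^ k)) :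
    HasPrimeChain Λ (D.N (a + k)) ((D ⊔ spanSingleton a y).N (a + k)) := by
  have := h.map_sup (LinearMap.toSpanSingleton R M y) (D.N (a + k)) fun r ⟨hr, hrk⟩ => ⟨hrk, hr⟩
  rwa [sup_eq_right.mpr (map_le_iff_le_comap.mpr inf_le_right), sup_comm,
    ← spanSingleton_N_add] at this

theorem hasUniformPrimeChains_sup_spanSingleton {a : ℕ} {y : M}
    (h : (D.colon a y).HasUniformPrimeChains (adic I)) :
    D.HasUniformPrimeChains (D ⊔ spanSingleton a y) := by
  obtain ⟨Λ, hΛ, h⟩ := h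
  refine ⟨Λ, hΛ, fun n => ?_⟩
  rcases lt_or_ge n a with hn | hn
  · rw [sup_N, spanSingleton_N_of_lt y hn, sup_bot_eq]
    exact .refl _ _
  · obtain ⟨k, rfl⟩ := Nat.exists_eq_add_of_le hn
    exact hasPrimeChain_sup_spanSingleton (h k)

/-- Primality of the graded ideal `⊕ₖ Pₖ tᵏ` of the Rees algebra, tested on homogeneous
elements `x tᵇ`. -/
def IsPrime (P : GradedReesSubmodule I R) : Prop :=
  P.N 0 ≠ ⊤ ∧ ∀ b, ∀ x ∈ I ^ b, x ∉ P.N b → P.colon b x = P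

theorem IsPrime.isPrime_N_zero {P : GradedReesSubmodule I R} (hP : P.IsPrime) :
    Ideal.IsPrime (P.N 0) := by
  refine ⟨hP.1, fun {r s} hrs => or_iff_not_imp_left.mpr fun hr => ?_⟩
  have hs : s ∈ (P.colon 0 r).N 0 := mem_colon.mpr ⟨by simp, by simpa [mul_comm] using hrs⟩
  rwa [hP.2 0 r (by simp) hr] at hs

theorem exists_isPrime_colon [IsNoetherianRing R] {Q : GradedReesSubmodule I R}
    (hQ : Q < adic I) : ∃ a y, y ∈ I ^ a ∧ y ∉ Q.N a ∧ (Q.colon a y).IsPrime := by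
  obtain ⟨a₀, y₀, hy₀, hy₀Q⟩ := exists_mem_notMem_of_lt hQ
  obtain ⟨P, ⟨a, y, hy, hyQ, rfl⟩, hmax⟩ :=
    (wellFounded_gt_Iic (adic I) (adic_toSubmodule_fg I)).has_min
      {P | ∃ a y, y ∈ I ^ a ∧ y ∉ Q.N a ∧ P = Q.colon a y} ⟨_, a₀, y₀, hy₀, hy₀Q, rfl⟩
  refine ⟨a, y, hy, hyQ, fun h => hyQ ?_, fun b x hx hxP => ?_⟩
  · have : (1 : R) ∈ (Q.colon a y).N 0 := h ▸ mem_top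
    simpa using (mem_colon.mp this).2
  · have hxy : x • y ∉ Q.N (a + b) := fun h => hxP (mem_colon.mpr ⟨hx, h⟩)
    have hxyI : x • y ∈ I ^ (a + b) := by
      rw [smul_eq_mul, mul_comm, pow_add]
      exact Ideal.mul_mem_mul hy hx
    rw [colon_colon y hx]
    exact ((colon_le_colon_smul y hx).lt_or_eq.resolve_left fun hlt =>
      hmax _ ⟨a + b, x • y, hxyI, hxy, rfl⟩ ⟨hlt, colon_le_adic _ _⟩).symm

theorem IsPrime.hasUniformPrimeChains_adic {P : GradedReesSubmodule I R} (hP : P.IsPrime)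
    (hPI : P ≤ adic I)
    (hext : ∀ x ∈ I, x ∉ P.N 1 → (P ⊔ spanSingleton 1 x).HasUniformPrimeChains (adic I)) :
    P.HasUniformPrimeChains (adic I) := by
  obtain ⟨Λ, hΛ, hP₀, hsucc⟩ : ∃ Λ : Set (Ideal R), Λ.Finite ∧ P.N 0 ∈ Λ ∧
      ∀ k, HasPrimeChain Λ (P.N k) (I ^ k) → HasPrimeChain Λ (P.N (k + 1)) (I ^ (k + 1)) := by
    by_cases hI : ∃ x ∈ I, x ∉ P.N 1
    · obtain ⟨x, hx, hxP⟩ := hI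
      obtain ⟨Λ, hΛ, h⟩ := hext x hx hxP
      refine ⟨insert (P.N 0) Λ, hΛ.insert _, Set.mem_insert _ _, fun k hk => ?_⟩
      rw [Nat.add_comm k 1]
      refine (hasPrimeChain_sup_spanSingleton ?_).trans ((h (1 + k)).mono (Set.subset_insert _ _))
      rwa [hP.2 1 x (by rwa [pow_one]) hxP]
    · push Not at hI
      refine ⟨{P.N 0}, Set.finite_singleton _, rfl, fun k _ => ?_⟩
      have : I ^ (k + 1) ≤ P.N (k + 1) := by
        rw [pow_succ, ← Ideal.smul_eq_mul]
        exact (smul_mono_right _ fun x hx => hI x hx).trans (P.pow_smul_le k 1)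
      rw [le_antisymm (hPI (k + 1)) this]
      exact .refl _ _
  refine ⟨Λ, hΛ, fun n => ?_⟩
  induction n with
  | zero =>
    change HasPrimeChain Λ (P.N 0) (I ^ 0)
    rw [pow_zero, Ideal.one_eq_top]
    exact .of_equiv le_top hP₀ hP.isPrime_N_zero
      (Quotient.equiv _ _ topEquiv (by ext; simp [submoduleOf]))
  | succ k ih => exact hsucc k ih

theorem hasUniformPrimeChains_adic [IsNoetherianRing R] {Q : GradedReesSubmodule I R}
    (hQ : Q ≤ adic I) : Q.HasUniformPrimeChains (adic I) := by
  induction Q using (wellFounded_gt_Iic (adic I) (adic_toSubmodule_fg I)).induction with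
  | _ Q ih =>
  rcases hQ.lt_or_eq with hlt | rfl
  · obtain ⟨a, y, hy, hyQ, hP⟩ := exists_isPrime_colon hlt
    have hle : Q ⊔ spanSingleton a y ≤ adic I := sup_le hQ (spanSingleton_le hy)
    refine (hasUniformPrimeChains_sup_spanSingleton (hP.hasUniformPrimeChains_adic
      (colon_le_adic a y) fun x hx hxP => ?_)).trans (ih _ ⟨lt_sup_spanSingleton hyQ, hle⟩ hle)
    have hle' : Q.colon a y ⊔ spanSingleton 1 x ≤ adic I :=
      sup_le (colon_le_adic a y) (spanSingleton_le (show x ∈ I ^ 1 by rwa [pow_one]))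
    exact ih _ ⟨(le_colon hQ hy).trans_lt (lt_sup_spanSingleton hxP), hle'⟩ hle'
  · exact .refl _

theorem hasUniformPrimeChains_of_le [IsNoetherianRing R] {T : GradedReesSubmodule I M}
    (hT : T.toSubmodule.FG) (hD : D ≤ T) : D.HasUniformPrimeChains T := by
  induction D using (wellFounded_gt_Iic T hT).induction with
  | _ D ih =>
  rcases hD.lt_or_eq with hlt | rfl
  · obtain ⟨a, y, hyT, hyD⟩ := exists_mem_notMem_of_lt hlt
    have hle : D ⊔ spanSingleton a y ≤ T := sup_le hD (spanSingleton_le hyT)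
    exact (hasUniformPrimeChains_sup_spanSingleton (hasUniformPrimeChains_adic
      (colon_le_adic a y))).trans (ih _ ⟨lt_sup_spanSingleton hyD, hle⟩ hle)
  · exact .refl _

end GradedReesSubmodule

theorem exists_finite_primeFiltration_filtration_general {R M : Type u} [CommRing R]
    [IsNoetherianRing R] [AddCommGroup M] [Module R M]
    (I : Ideal R) (F : I.Filtration M) (hF0 : F.N 0 = ⊤) (hFG : F.submodule.FG) :
    ∃ Λ : Set (Ideal R), Λ.Finite ∧
      ∀ n : ℕ, HasPrimeFiltrationIn R (M ⧸ F.N n) Λ := by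
  let shift : GradedReesSubmodule I M := ⟨fun n => F.N (n + 1), fun n => F.smul_le (n + 1)⟩
  obtain ⟨Λ, hΛ, hsucc⟩ := GradedReesSubmodule.hasUniformPrimeChains_of_le
    (T := .ofFiltration F) (D := shift)
    (GradedReesSubmodule.toSubmodule_ofFiltration F ▸ hFG) fun n => F.mono n
  refine ⟨Λ, hΛ, fun n => hasPrimeFiltrationIn_quotient ?_⟩
  rw [← hF0]
  exact Submodule.HasPrimeChain.of_forall_succ (N := F.N) hsucc n

/-- Let `R` be Noetherian, `I` an ideal, and `M` an `I`-filtered module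
(`M₀ = M`, `I Mₙ ⊆ Mₙ₊₁`, `⊕ₙ Mₙ` finitely generated over the Rees ring `⊕ₙ Iⁿ`).  Then
there is a finite set `Λ` of prime ideals of `R` such that for every `n`, the quotient
`M/Mₙ` admits a prime filtration all of whose prime factors belong to `Λ`. -/
theorem exists_finite_primeFiltration_filtration {R M : Type u} [CommRing R]
    [IsNoetherianRing R] [AddCommGroup M] [Module R M] [Module.Finite R M]
    (I : Ideal R) (F : I.Filtration M) (hF0 : F.N 0 = ⊤) (hFG : F.submodule.FG) :
    ∃ Λ : Set (Ideal R), Λ.Finite ∧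
      ∀ n : ℕ, HasPrimeFiltrationIn R (M ⧸ F.N n) Λ :=
  exists_finite_primeFiltration_filtration_general I F hF0 hFG
end

section
/- Let $R$ be a Noetherian ring and $I$ an ideal of $R$. Then the union over all $n \geq 1$ of the sets of associated primes of $R/I^n$ is a finite set. -/
/-!
Let `S = R[It]` be the Rees algebra. Sending `a ↦ a tⁿ` embeds `Iⁿ/Iⁿ⁺¹` into `S/IS` as an
`R`-module, so the exact sequences `0 → Iⁿ/Iⁿ⁺¹ → R/Iⁿ⁺¹ → R/Iⁿ → 0` put every `Ass_R(R/Iⁿ)` inside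
`Ass_R(S/IS)`. As `S` is Noetherian, each prime of `Ass_R(S/IS)` is the contraction of a prime of
`Ass_S(S/IS)`, and the finitely generated `S`-module `S/IS` has only finitely many of these.
-/

open Polynomial

section

variable {R M : Type*} [CommRing R] [AddCommGroup M] [Module R M]

theorem associatedPrimes.quotient_subset_union_of_le {N N' : Submodule R M} (h : N ≤ N') :
    associatedPrimes R (M ⧸ N) ⊆
      associatedPrimes R (N'.map N.mkQ) ∪ associatedPrimes R (M ⧸ N') := by
  rw [← LinearEquiv.AssociatedPrimes.eq (Submodule.quotientQuotientEquivQuotient N N' h)]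
  exact associatedPrimes.subset_union_of_exact (Submodule.injective_subtype _)
    (LinearMap.exact_subtype_mkQ _)

theorem associatedPrimes.range_eq_of_ker_eq {P Q : Type*} [AddCommGroup P] [Module R P]
    [AddCommGroup Q] [Module R Q] {f : M →ₗ[R] P} {g : M →ₗ[R] Q}
    (h : LinearMap.ker f = LinearMap.ker g) :
    associatedPrimes R (LinearMap.range f) = associatedPrimes R (LinearMap.range g) :=
  LinearEquiv.AssociatedPrimes.eq <| f.quotKerEquivRange.symm.trans <|
    (Submodule.quotEquivOfEq _ _ h).trans g.quotKerEquivRange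

end

theorem associatedPrimes.subset_image_comap {R S M : Type*} [CommSemiring R] [CommSemiring S]
    [Algebra R S] [IsNoetherianRing S] [AddCommMonoid M] [Module R M] [Module S M]
    [IsScalarTower R S M] :
    associatedPrimes R M ⊆ Ideal.comap (algebraMap R S) '' associatedPrimes S M := by
  rintro p ⟨hp, x, rfl⟩
  set Q : Ideal S := (⊥ : Submodule S M).colon {x}
  have hcomap : Q.radical.comap (algebraMap R S) = ((⊥ : Submodule R M).colon {x}).radical := by
    rw [Ideal.comap_radical]
    congr 1
    ext r
    simp [Q, Submodule.mem_colon_singleton, algebraMap_smul]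
  have hfin := Q.finite_minimalPrimes_of_isNoetherianRing S
  -- `p` is the contraction of a minimal prime of `ann_S(x)`, and these are associated primes.
  obtain ⟨P, hPmin, hPle⟩ : ∃ P ∈ Q.minimalPrimes,
      P.comap (algebraMap R S) ≤ ((⊥ : Submodule R M).colon {x}).radical := by
    have := hcomap.le
    rw [← Q.sInf_minimalPrimes, ← hfin.coe_toFinset, ← Finset.inf_id_eq_sInf,
      Finset.inf_eq_iInf] at this
    simp only [id, Ideal.comap_iInf] at this
    rw [← Finset.inf_eq_iInf] at this
    simpa using hp.inf_le'.mp this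
  obtain ⟨y, rfl⟩ := Submodule.exists_eq_colon_of_mem_minimalPrimes hPmin
  refine ⟨_, isAssociatedPrime_iff.mpr ⟨hPmin.isPrime, y, rfl⟩, le_antisymm hPle ?_⟩
  rw [← hcomap]
  exact Ideal.comap_mono (hPmin.isPrime.radical_le_iff.mpr hPmin.1.2)

namespace reesAlgebra

variable {R : Type*} [CommRing R] (I : Ideal R)

noncomputable def monomialLinearMap (n : ℕ) : ↥(I ^ n) →ₗ[R] reesAlgebra I :=
  LinearMap.codRestrict (reesAlgebra I).toSubmodule ((monomial n).comp (I ^ n).subtype)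
    fun a => monomial_mem.mpr a.2

@[simp]
theorem coe_monomialLinearMap (n : ℕ) (a : ↥(I ^ n)) :
    (monomialLinearMap I n a : R[X]) = monomial n (a : R) :=
  rfl

theorem coeff_mem_pow_succ_of_mem_map {f : reesAlgebra I}
    (hf : f ∈ I.map (algebraMap R (reesAlgebra I))) (k : ℕ) :
    (f : R[X]).coeff k ∈ I ^ (k + 1) := by
  rw [← Submodule.restrictScalars_mem R, ← Ideal.smul_top_eq_map] at hf
  refine Submodule.smul_induction_on
    (p := fun f : reesAlgebra I => (f : R[X]).coeff k ∈ I ^ (k + 1)) hf ?_ ?_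
  · intro r hr s _
    rw [pow_succ']
    exact Ideal.mul_mem_mul hr (s.2 k)
  · intro f g hf hg
    simpa only [Subalgebra.coe_add, coeff_add] using add_mem hf hg

theorem monomialLinearMap_mem_map_of_mem_pow_succ {n : ℕ} {a : R} (han : a ∈ I ^ n)
    (ha : a ∈ I ^ (n + 1)) :
    monomialLinearMap I n ⟨a, han⟩ ∈ I.map (algebraMap R (reesAlgebra I)) := by
  rw [pow_succ'] at ha
  induction ha using Submodule.mul_induction_on' with
  | mem_mul_mem r hr b hb =>
    rw [show (⟨r * b, han⟩ : ↥(I ^ n)) = r • ⟨b, hb⟩ from rfl, map_smul, Algebra.smul_def]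
    exact Ideal.mul_mem_right _ _ (Ideal.mem_map_of_mem _ hr)
  | add x hx y hy hx' hy' =>
    have hxn : x ∈ I ^ n := Ideal.mul_le_right hx
    have hyn : y ∈ I ^ n := Ideal.mul_le_right hy
    rw [show (⟨x + y, han⟩ : ↥(I ^ n)) = ⟨x, hxn⟩ + ⟨y, hyn⟩ from rfl, map_add]
    exact add_mem (hx' hxn) (hy' hyn)

theorem ker_mkQ_comp_monomialLinearMap (n : ℕ) :
    LinearMap.ker (((I.map (algebraMap R (reesAlgebra I))).mkQ.restrictScalars R) ∘ₗ
      monomialLinearMap I n) = LinearMap.ker ((I ^ (n + 1)).mkQ ∘ₗ (I ^ n).subtype) := by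
  ext a
  simp only [LinearMap.mem_ker, LinearMap.comp_apply, LinearMap.restrictScalars_apply,
    Submodule.mkQ_apply, Submodule.Quotient.mk_eq_zero, Submodule.subtype_apply]
  refine ⟨fun h => ?_, monomialLinearMap_mem_map_of_mem_pow_succ I a.2⟩
  simpa using coeff_mem_pow_succ_of_mem_map I h n

theorem associatedPrimes_quotient_pow_succ_subset_union (n : ℕ) :
    associatedPrimes R (R ⧸ I ^ (n + 1)) ⊆
      associatedPrimes R (reesAlgebra I ⧸ I.map (algebraMap R (reesAlgebra I))) ∪
        associatedPrimes R (R ⧸ I ^ n) := by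
  have hrange : Submodule.map (I ^ (n + 1)).mkQ (I ^ n) =
      LinearMap.range ((I ^ (n + 1)).mkQ ∘ₗ (I ^ n).subtype) := by
    rw [LinearMap.range_comp, Submodule.range_subtype]
  refine (associatedPrimes.quotient_subset_union_of_le (Ideal.pow_le_pow_right n.le_succ)).trans
    (Set.union_subset_union_left _ ?_)
  rw [hrange, ← associatedPrimes.range_eq_of_ker_eq (ker_mkQ_comp_monomialLinearMap I n)]
  exact associatedPrimes.subset_of_injective (Submodule.injective_subtype _)

theorem associatedPrimes_quotient_pow_subset (n : ℕ) :
    associatedPrimes R (R ⧸ I ^ n) ⊆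
      associatedPrimes R (reesAlgebra I ⧸ I.map (algebraMap R (reesAlgebra I))) := by
  induction n with
  | zero =>
    have : Subsingleton (R ⧸ I ^ 0) := Ideal.Quotient.subsingleton_iff.mpr (by simp)
    simp [associatedPrimes.eq_empty_of_subsingleton]
  | succ n ih =>
    exact (associatedPrimes_quotient_pow_succ_subset_union I n).trans (Set.union_subset le_rfl ih)

end reesAlgebra

/-- **Ratliff.** Let `R` be a Noetherian ring and `I` an ideal of `R`.
Then the union over all `n ≥ 1` of the sets of associated primes of `R/Iⁿ` is finite. -/
theorem finite_iUnion_associatedPrimes_quotient_powers {R : Type*} [CommRing R]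
    [IsNoetherianRing R] (I : Ideal R) :
    (⋃ n ∈ {n : ℕ | 1 ≤ n}, associatedPrimes R (R ⧸ I ^ n)).Finite := by
  have hfin : (associatedPrimes (reesAlgebra I)
      (reesAlgebra I ⧸ I.map (algebraMap R (reesAlgebra I)))).Finite :=
    associatedPrimes.finite _ _
  refine (hfin.image (Ideal.comap (algebraMap R (reesAlgebra I)))).subset ?_
  exact Set.iUnion₂_subset fun n _ =>
    (reesAlgebra.associatedPrimes_quotient_pow_subset I n).trans
      associatedPrimes.subset_image_comap
end

section
/- Let $R$ be a Noetherian ring, $I$ an ideal, and $M$ an $I$-filtered module. Then there exist an integer $m \geq 1$, an element $x \in I^m$, and an integer $c$ such that for all $n \geq c$, $(M_{n+m} :_M x) \cap M_c = M_n$ (i.e. $x$ is a superficial element for $M$ of order $m$). -/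
/-!
The Rees algebra `S = ⊕ Iⁿtⁿ` acts on `gr_F M = ⊕ Mₙ/Mₙ₊₁`, a finitely generated `S`-module, so it
has finitely many associated primes. Homogeneous prime avoidance gives `s = x tᵐ` with `m ≥ 1`,
`x ∈ Iᵐ`, outside every associated prime that does not contain `S₊`. Every associated prime of
`0 :_{gr} s` then contains `S₊`, so some `S₊ᵉ` kills `0 :_{gr} s`; in degree `n` this says
`Iᵉ ((Mₙ₊ₘ₊₁ :_M x) ∩ Mₙ) ⊆ Mₙ₊ₑ₊₁`. The colon filtration `n ↦ (Mₙ₊ₘ₊₁ :_M x) ∩ Mₙ` lies inside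
the stable filtration `F`, hence is stable itself, and with the previous bound this forces
`(Mₙ₊ₘ₊₁ :_M x) ∩ Mₙ ⊆ Mₙ₊₁` for `n ≫ 0`. Induction on `n` turns this into superficiality.
-/

universe u

open Polynomial PolynomialModule

namespace Ideal

variable {S σ : Type*} [CommRing S] [SetLike σ S] (𝒜 : ℕ → σ) [SetLike.GradedMonoid 𝒜]

theorem exists_homogeneous_pos_notMem_forall_mem (T : Finset (Ideal S)) {P : Ideal S}
    [P.IsPrime] (hpos : ∃ n, 0 < n ∧ ∃ a ∈ 𝒜 n, a ∉ P)
    (hsep : ∀ Q ∈ T, ∃ n, ∃ a ∈ 𝒜 n, a ∈ Q ∧ a ∉ P) :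
    ∃ n, 0 < n ∧ ∃ c ∈ 𝒜 n, c ∉ P ∧ ∀ Q ∈ T, c ∈ Q := by
  choose! d a ha haQ haP using hsep
  obtain ⟨n, hn, b, hb, hbP⟩ := hpos
  refine ⟨n + ∑ Q ∈ T, d Q, by omega, b * ∏ Q ∈ T, a Q,
    SetLike.mul_mem_graded hb (SetLike.prod_mem_graded 𝒜 d a ha), ?_, fun Q hQ => ?_⟩
  · simpa [IsPrime.mul_mem_iff_mem_or_mem, IsPrime.prod_mem_iff, hbP] using haP
  · exact mul_mem_left _ _ (prod_mem Q hQ (haQ Q hQ))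

/-- Homogeneous prime avoidance. -/
theorem exists_homogeneous_pos_forall_notMem [AddSubmonoidClass σ S] (T : Finset (Ideal S))
    (hT : ∀ P ∈ T, P.IsPrime) (hpos : ∀ P ∈ T, ∃ n, 0 < n ∧ ∃ a ∈ 𝒜 n, a ∉ P) :
    ∃ n, 0 < n ∧ ∃ a ∈ 𝒜 n, ∀ P ∈ T, a ∉ P := by
  classical
  induction T using Finset.strongInduction with
  | H T ih =>
  -- a prime whose homogeneous elements all lie in another prime of `T` can be dropped
  by_cases hcomp : ∃ P ∈ T, ∃ Q ∈ T, Q ≠ P ∧ ∀ n, ∀ a ∈ 𝒜 n, a ∈ Q → a ∈ P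
  · obtain ⟨P, hP, Q, hQ, hQP, hQP'⟩ := hcomp
    obtain ⟨n, hn, a, ha, haT⟩ := ih (T.erase Q) (Finset.erase_ssubset hQ)
      (fun P' hP' => hT P' (Finset.mem_of_mem_erase hP'))
      (fun P' hP' => hpos P' (Finset.mem_of_mem_erase hP'))
    refine ⟨n, hn, a, ha, fun P' hP' hP'a => ?_⟩
    by_cases hP'Q : P' = Q
    · subst hP'Q
      exact haT P (Finset.mem_erase.mpr ⟨hQP.symm, hP⟩) (hQP' n a ha hP'a)
    · exact haT P' (Finset.mem_erase.mpr ⟨hP'Q, hP'⟩) hP'a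
  push Not at hcomp
  obtain rfl | ⟨P, hP⟩ := T.eq_empty_or_nonempty
  · exact ⟨1, one_pos, 0, zero_mem _, by simp⟩
  have := hT P hP
  obtain ⟨nb, hnb, b, hb, hbT⟩ := ih (T.erase P) (Finset.erase_ssubset hP)
    (fun Q hQ => hT Q (Finset.mem_of_mem_erase hQ))
    (fun Q hQ => hpos Q (Finset.mem_of_mem_erase hQ))
  by_cases hbP : b ∈ P
  · obtain ⟨nc, hnc, c, hc, hcP, hcT⟩ := exists_homogeneous_pos_notMem_forall_mem 𝒜 (T.erase P)
      (hpos P hP) fun Q hQ => hcomp P hP Q (Finset.mem_of_mem_erase hQ) (Finset.ne_of_mem_erase hQ)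
    -- `b` lies in `P` but in no other prime of `T`, `c` in every prime of `T` but `P`
    refine ⟨nc * nb, by positivity, b ^ nc + c ^ nb, add_mem (SetLike.pow_mem_graded nc hb)
      (mul_comm nc nb ▸ SetLike.pow_mem_graded nb hc), fun Q hQ => ?_⟩
    have := hT Q hQ
    by_cases hQP : Q = P
    · subst hQP
      rw [Q.add_mem_iff_right (pow_mem_of_mem _ hbP nc hnc)]
      exact fun h => hcP (IsPrime.mem_of_pow_mem this _ h)
    · have hQ' := Finset.mem_erase.mpr ⟨hQP, hQ⟩
      rw [Q.add_mem_iff_left (pow_mem_of_mem _ (hcT Q hQ') nb hnb)]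
      exact fun h => hbT Q hQ' (IsPrime.mem_of_pow_mem this _ h)
  · refine ⟨nb, hnb, b, hb, fun Q hQ => ?_⟩
    by_cases hQP : Q = P
    · exact hQP ▸ hbP
    · exact hbT Q (Finset.mem_erase.mpr ⟨hQP, hQ⟩)

end Ideal

section AssociatedPrimes

variable {S N : Type*} [CommRing S] [IsNoetherianRing S] [AddCommGroup N] [Module S N]
  [Module.Finite S N]

theorem exists_pow_le_annihilator_of_le_associatedPrimes {J : Ideal S}
    (hJ : ∀ P ∈ associatedPrimes S N, J ≤ P) : ∃ e, J ^ e ≤ Module.annihilator S N := by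
  refine Ideal.exists_pow_le_of_le_radical_of_fg ?_ (IsNoetherian.noetherian J)
  rw [← Ideal.sInf_minimalPrimes]
  exact le_sInf fun P hP =>
    hJ P (Module.associatedPrimes.minimalPrimes_annihilator_subset_associatedPrimes S N hP)

theorem exists_pow_smul_eq_zero_of_smul_eq_zero (J : Ideal S) {s : S}
    (hs : ∀ P ∈ associatedPrimes S N, ¬J ≤ P → s ∉ P) :
    ∃ e, ∀ t ∈ J ^ e, ∀ q : N, s • q = 0 → t • q = 0 := by
  obtain ⟨e, he⟩ := exists_pow_le_annihilator_of_le_associatedPrimes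
    (N := Submodule.torsionBy S N s) (J := J) fun P hP => by
      by_contra hJP
      refine hs P (associatedPrimes.subset_of_injective (Submodule.injective_subtype _) hP) hJP ?_
      refine hP.annihilator_le ?_
      rw [Submodule.annihilator_top]
      exact Module.mem_annihilator.mpr (Submodule.torsionBy_isTorsionBy s)
  exact ⟨e, fun t ht q hq => congrArg Subtype.val (Module.mem_annihilator.mp (he ht) ⟨q, hq⟩)⟩

end AssociatedPrimes

noncomputable section

variable {R M : Type*} [CommRing R] [AddCommGroup M] [Module R M] {I : Ideal R}

def reesAlgebra.homogeneousSubmodule (I : Ideal R) (n : ℕ) : Submodule R (reesAlgebra I) :=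
  Submodule.comap (reesAlgebra I).val.toLinearMap (Submodule.map (monomial n) (I ^ n))

theorem reesAlgebra.monomial_mul_monomial {m n : ℕ} {a b : R} (ha : a ∈ I ^ m) (hb : b ∈ I ^ n) :
    (⟨monomial m a, monomial_mem.mpr ha⟩ * ⟨monomial n b, monomial_mem.mpr hb⟩ : reesAlgebra I) =
      ⟨monomial (m + n) (a * b), monomial_mem.mpr (pow_add I m n ▸ Ideal.mul_mem_mul ha hb)⟩ :=
  Subtype.ext (Polynomial.monomial_mul_monomial m n a b)

instance : SetLike.GradedMonoid (reesAlgebra.homogeneousSubmodule I) where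
  one_mem := ⟨1, by simp, by simp⟩
  mul_mem := by
    rintro m n s t ⟨a, ha, hsa⟩ ⟨b, hb, htb⟩
    refine ⟨a * b, pow_add I m n ▸ Ideal.mul_mem_mul ha hb, ?_⟩
    simp only [AlgHom.toLinearMap_apply, Subalgebra.coe_val, MulMemClass.coe_mul] at hsa htb ⊢
    rw [← hsa, ← htb, Polynomial.monomial_mul_monomial]

theorem reesAlgebra.monomial_mem_span_pow : ∀ {n : ℕ} {r : R} (hr : r ∈ I ^ n),
    (⟨monomial n r, monomial_mem.mpr hr⟩ : reesAlgebra I) ∈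
      Ideal.span (homogeneousSubmodule I 1 : Set (reesAlgebra I)) ^ n
  | 0, _, _ => by simp
  | n + 1, r, hr => by
    have h : r ∈ I ^ n * I := pow_succ I n ▸ hr
    revert hr
    induction h using Submodule.mul_induction_on' with
    | mem_mul_mem a ha b hb =>
      intro _
      rw [← monomial_mul_monomial ha (by rwa [pow_one]), pow_succ]
      exact Ideal.mul_mem_mul (monomial_mem_span_pow ha)
        (Ideal.subset_span ⟨b, by rwa [pow_one], rfl⟩)
    | add a ha b hb iha ihb =>
      intro _
      convert add_mem (iha (pow_succ I n ▸ ha)) (ihb (pow_succ I n ▸ hb)) using 1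
      exact Subtype.ext ((monomial (n + 1)).map_add a b)

namespace Ideal.Filtration

variable (F : I.Filtration M)

def shift : I.Filtration M where
  N n := F.N (n + 1)
  mono n := F.mono (n + 1)
  smul_le n := F.smul_le (n + 1)

theorem single_mem_submodule {n : ℕ} {y : M} (hy : y ∈ F.N n) : single R n y ∈ F.submodule := by
  intro i
  rw [coeff_single, Finsupp.single_apply]
  split_ifs with h
  · exact h ▸ hy
  · exact zero_mem _

/-- `gr_F M = ⊕ Mₙ / Mₙ₊₁`, realised as the image of `⊕ Mₙ` in `M[X] / ⊕ Mₙ₊₁`. -/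
def associatedGraded : Submodule (reesAlgebra I) (PolynomialModule R M ⧸ F.shift.submodule) :=
  F.submodule.map F.shift.submodule.mkQ

def grMk (n : ℕ) (y : F.N n) : F.associatedGraded :=
  ⟨F.shift.submodule.mkQ (single R n y), Submodule.mem_map_of_mem (F.single_mem_submodule y.2)⟩

theorem grMk_eq_zero_iff {n : ℕ} {y : F.N n} : F.grMk n y = 0 ↔ (y : M) ∈ F.N (n + 1) := by
  rw [← Subtype.coe_inj]
  refine (Submodule.Quotient.mk_eq_zero _).trans
    ⟨fun h => ?_, fun h => F.shift.single_mem_submodule h⟩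
  have := h n
  rwa [coeff_single, Finsupp.single_eq_same] at this

theorem monomial_smul_grMk {j n : ℕ} {r : R} (hr : r ∈ I ^ j) (y : F.N n) :
    (⟨monomial j r, reesAlgebra.monomial_mem.mpr hr⟩ : reesAlgebra I) • F.grMk n y =
      F.grMk (j + n) ⟨r • (y : M), F.pow_smul_le j n (Submodule.smul_mem_smul hr y.2)⟩ := by
  rw [← Subtype.coe_inj]
  simp only [grMk, Submodule.coe_smul, ← LinearMap.map_smul]
  congr 1
  exact (Subalgebra.smul_def _ _).trans (monomial_smul_single j r n (y : M))

/-- `(Mₙ₊ₖ :_M x) ∩ Mₙ`. -/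
def colon (x : R) (k : ℕ) : I.Filtration M where
  N n := F.N n ⊓ (F.N (n + k)).comap (LinearMap.lsmul R M x)
  mono n := inf_le_inf (F.mono n) (Submodule.comap_mono (F.antitone (by omega)))
  smul_le n := by
    rw [Submodule.smul_le]
    intro r hr y hy
    obtain ⟨hy, hxy⟩ := Submodule.mem_inf.mp hy
    refine ⟨F.smul_le n (Submodule.smul_mem_smul hr hy), ?_⟩
    simp only [SetLike.mem_coe, Submodule.mem_comap, LinearMap.lsmul_apply] at hxy ⊢
    rw [smul_comm, add_right_comm]
    exact F.smul_le _ (Submodule.smul_mem_smul hr hxy)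

theorem colon_le (x : R) (k : ℕ) : F.colon x k ≤ F := fun _ => inf_le_left

theorem exists_pow_smul_colon_le [IsNoetherianRing R] (hFG : F.submodule.FG) :
    ∃ m, 0 < m ∧ ∃ x ∈ I ^ m, ∃ e, ∀ n, I ^ e • (F.colon x (m + 1)).N n ≤ F.N (n + e + 1) := by
  classical
  let J := Ideal.span (reesAlgebra.homogeneousSubmodule I 1 : Set (reesAlgebra I))
  have : Module.Finite (reesAlgebra I) F.associatedGraded := Module.Finite.iff_fg.mpr (hFG.map _)
  have hfin := associatedPrimes.finite (reesAlgebra I) F.associatedGraded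
  obtain ⟨m, hm, s, ⟨x, hx, hxs⟩, hsP⟩ := Ideal.exists_homogeneous_pos_forall_notMem
    (reesAlgebra.homogeneousSubmodule I) (hfin.toFinset.filter fun P => ¬J ≤ P)
    (fun P hP => (hfin.mem_toFinset.mp (Finset.mem_filter.mp hP).1).isPrime) fun P hP => by
      obtain ⟨a, ha, haP⟩ := Set.not_subset.mp (mt Ideal.span_le.mpr (Finset.mem_filter.mp hP).2)
      exact ⟨1, one_pos, a, ha, haP⟩
  obtain rfl : s = ⟨monomial m x, reesAlgebra.monomial_mem.mpr hx⟩ := Subtype.ext hxs.symm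
  obtain ⟨e, he⟩ := exists_pow_smul_eq_zero_of_smul_eq_zero J
    fun P hP hJP => hsP P (Finset.mem_filter.mpr ⟨hfin.mem_toFinset.mpr hP, hJP⟩)
  refine ⟨m, hm, x, hx, e, fun n => Submodule.smul_le.mpr fun r hr y hyG => ?_⟩
  obtain ⟨hy, hxy⟩ := Submodule.mem_inf.mp hyG
  -- `x tᵐ` kills the class of `y` in degree `n`, hence so does `r tᵉ ∈ S₊ᵉ`
  have hr' := he _ (reesAlgebra.monomial_mem_span_pow hr) (F.grMk n ⟨y, hy⟩) (by
    rw [F.monomial_smul_grMk hx, grMk_eq_zero_iff]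
    exact (show n + (m + 1) = m + n + 1 by omega) ▸ hxy)
  rw [F.monomial_smul_grMk hr, grMk_eq_zero_iff] at hr'
  exact (show e + n + 1 = n + e + 1 by omega) ▸ hr'

theorem comap_lsmul_inf_eq_of_colon_le {x : R} {m c : ℕ} (hx : x ∈ I ^ m)
    (h : ∀ n ≥ c, (F.colon x (m + 1)).N n ≤ F.N (n + 1)) {n : ℕ} (hn : c ≤ n) :
    (F.N (n + m)).comap (LinearMap.lsmul R M x) ⊓ F.N c = F.N n := by
  refine le_antisymm ?_ (le_inf (fun y hy => ?_) (F.antitone hn))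
  · induction n, hn using Nat.le_induction with
    | base => exact inf_le_right
    | succ n hcn ih =>
      intro y hy
      obtain ⟨hxy, hyc⟩ := Submodule.mem_inf.mp hy
      refine h n hcn ⟨ih ⟨F.antitone (by omega) hxy, hyc⟩, ?_⟩
      exact (show n + 1 + m = n + (m + 1) by omega) ▸ hxy
  · rw [Submodule.mem_comap, LinearMap.lsmul_apply, add_comm]
    exact F.pow_smul_le m n (Submodule.smul_mem_smul hx hy)

theorem Stable.exists_forall_le_of_pow_smul_le {G : I.Filtration M} (hG : G.Stable)
    {N : ℕ → Submodule R M} {e : ℕ} (h : ∀ n, I ^ e • G.N n ≤ N (n + e)) :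
    ∃ c, ∀ n ≥ c, G.N n ≤ N n := by
  obtain ⟨n₀, hn₀⟩ := hG.exists_pow_smul_eq
  refine ⟨n₀ + e, fun n hn => ?_⟩
  obtain ⟨k, rfl⟩ := Nat.exists_eq_add_of_le hn
  calc G.N (n₀ + e + k) = I ^ e • G.N (n₀ + k) := by
        rw [add_assoc, hn₀, hn₀, pow_add, mul_smul]
    _ ≤ N (n₀ + k + e) := h _
    _ = N (n₀ + e + k) := by rw [add_right_comm]

end Ideal.Filtration

end

theorem exists_superficial_element_general {R M : Type u} [CommRing R] [IsNoetherianRing R]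
    [AddCommGroup M] [Module R M] [Module.Finite R M]
    (I : Ideal R) (F : I.Filtration M) (hFG : F.submodule.FG) :
    ∃ m : ℕ, 1 ≤ m ∧ ∃ x ∈ I ^ m, ∃ c : ℕ, ∀ n : ℕ, c ≤ n →
      Submodule.comap (LinearMap.lsmul R M x) (F.N (n + m)) ⊓ F.N c = F.N n := by
  obtain ⟨m, hm, x, hx, e, he⟩ := F.exists_pow_smul_colon_le hFG
  have hF : F.Stable := (F.submodule_fg_iff_stable fun _ => IsNoetherian.noetherian _).mp hFG
  obtain ⟨c, hc⟩ := (hF.of_le (F.colon_le x (m + 1))).exists_forall_le_of_pow_smul_le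
    (N := fun n => F.N (n + 1)) he
  exact ⟨m, hm, x, hx, c, fun n hn => F.comap_lsmul_inf_eq_of_colon_le hx hc hn⟩

/-- **existence of superficial elements.** Let `R` be Noetherian, `I` an
ideal, and `M` an `I`-filtered module (`M₀ = M`, `I Mₙ ⊆ Mₙ₊₁`, `⊕ₙ Mₙ` finitely
generated over the Rees ring `⊕ₙ Iⁿ`).  Then there are `m ≥ 1`, `x ∈ Iᵐ`, and `c` such
that for all `n ≥ c` we have `(M_{n+m} :_M x) ∩ M_c = Mₙ`; that is, `x` is a superficial
element for `M` of order `m`. -/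
theorem exists_superficial_element {R M : Type u} [CommRing R] [IsNoetherianRing R]
    [AddCommGroup M] [Module R M] [Module.Finite R M]
    (I : Ideal R) (F : I.Filtration M) (hF0 : F.N 0 = ⊤) (hFG : F.submodule.FG) :
    ∃ m : ℕ, 1 ≤ m ∧ ∃ x ∈ I ^ m, ∃ c : ℕ, ∀ n : ℕ, c ≤ n →
      Submodule.comap (LinearMap.lsmul R M x) (F.N (n + m)) ⊓ F.N c = F.N n :=
  exists_superficial_element_general I F hFG
end

section
/- Let $R$ be a Noetherian ring, $I$ an ideal, $M$ an $I$-filtered module, and $x$ a superficial element for $M$ of order $m$. Then for all sufficiently large $n$, $(M_n :_M x) = (0 :_M x) + M_{n-m}$. -/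
/-!
By Artin–Rees applied to the submodule `x • M`, there is `k` with `M_n ∩ xM ⊆ x M_{n-k}` for
`n ≥ k`. So if `x y ∈ M_n`, then `x y = x z` with `z ∈ M_{n-k} ⊆ M_c`, and superficiality
puts `z` in `M_{n-m}`; hence `y = (y - z) + z ∈ (0 :_M x) + M_{n-m}`. The reverse inclusion
is `I^m M_{n-m} ⊆ M_n`.
-/

universe u

namespace Ideal.Filtration

variable {R M : Type*} [CommRing R] [AddCommGroup M] [Module R M] {I : Ideal R}
  (F : I.Filtration M)

theorem pow_smul_top_le (hF0 : F.N 0 = ⊤) (j : ℕ) : I ^ j • (⊤ : Submodule R M) ≤ F.N j := by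
  simpa [hF0] using F.pow_smul_le j 0

theorem le_comap_lsmul_of_mem_pow {x : R} {m : ℕ} (hx : x ∈ I ^ m) (n : ℕ) :
    F.N n ≤ (F.N (n + m)).comap (LinearMap.lsmul R M x) := fun _ hy =>
  add_comm m n ▸ F.pow_smul_le m n (Submodule.smul_mem_smul hx hy)

theorem exists_inf_range_lsmul_le_map [IsNoetherianRing R] [Module.Finite R M]
    (hF : F.Stable) (hF0 : F.N 0 = ⊤) (x : R) :
    ∃ k, ∀ n, k ≤ n → F.N n ⊓ LinearMap.range (LinearMap.lsmul R M x) ≤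
      (F.N (n - k)).map (LinearMap.lsmul R M x) := by
  set xM := LinearMap.range (LinearMap.lsmul R M x)
  obtain ⟨k, hk⟩ := (hF.inter_right (I.trivialFiltration xM)).exists_pow_smul_eq_of_ge
  refine ⟨k, fun n hn => ?_⟩
  calc F.N n ⊓ xM = I ^ (n - k) • (F.N k ⊓ xM) := hk n hn
    _ ≤ I ^ (n - k) • xM := smul_mono_right _ inf_le_right
    _ = (I ^ (n - k) • ⊤ : Submodule R M).map (LinearMap.lsmul R M x) := by
        rw [Submodule.map_smul'', Submodule.map_top]
    _ ≤ (F.N (n - k)).map (LinearMap.lsmul R M x) :=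
        Submodule.map_mono (F.pow_smul_top_le hF0 _)

theorem comap_lsmul_le_ker_sup {x : R} {m c k : ℕ}
    (hsup : ∀ n : ℕ, c ≤ n →
      (F.N (n + m)).comap (LinearMap.lsmul R M x) ⊓ F.N c = F.N n)
    (hk : ∀ n, k ≤ n → F.N n ⊓ LinearMap.range (LinearMap.lsmul R M x) ≤
      (F.N (n - k)).map (LinearMap.lsmul R M x))
    {n : ℕ} (hn : k + c + m ≤ n) :
    (F.N n).comap (LinearMap.lsmul R M x) ≤
      LinearMap.ker (LinearMap.lsmul R M x) ⊔ F.N (n - m) := by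
  intro y (hy : x • y ∈ F.N n)
  obtain ⟨z, hz, hxz⟩ := hk n (by omega) ⟨hy, y, rfl⟩
  have hxz : x • z = x • y := hxz
  have hzc : z ∈ F.N c := F.antitone (by omega) hz
  have hzn : z ∈ F.N (n - m) := by
    rw [← hsup (n - m) (by omega)]
    refine ⟨?_, hzc⟩
    change x • z ∈ F.N (n - m + m)
    rwa [hxz, Nat.sub_add_cancel (by omega)]
  have hker : y - z ∈ LinearMap.ker (LinearMap.lsmul R M x) := by
    simp [smul_sub, hxz]
  simpa using Submodule.add_mem_sup hker hzn

end Ideal.Filtration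

theorem superficial_colon_eq_general {R M : Type u} [CommRing R] [IsNoetherianRing R]
    [AddCommGroup M] [Module R M] [Module.Finite R M]
    (I : Ideal R) (F : I.Filtration M) (hF0 : F.N 0 = ⊤) (hFG : F.submodule.FG)
    (m : ℕ) (x : R) (hx : x ∈ I ^ m) (c : ℕ)
    (hsup : ∀ n : ℕ, c ≤ n →
      Submodule.comap (LinearMap.lsmul R M x) (F.N (n + m)) ⊓ F.N c = F.N n) :
    ∃ N₀ : ℕ, ∀ n : ℕ, N₀ ≤ n →
      Submodule.comap (LinearMap.lsmul R M x) (F.N n) =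
        LinearMap.ker (LinearMap.lsmul R M x) ⊔ F.N (n - m) := by
  have hstable : F.Stable :=
    (F.submodule_fg_iff_stable fun _ => IsNoetherian.noetherian _).mp hFG
  obtain ⟨k, hk⟩ := F.exists_inf_range_lsmul_le_map hstable hF0 x
  refine ⟨k + c + m, fun n hn => le_antisymm (F.comap_lsmul_le_ker_sup hsup hk hn) ?_⟩
  refine sup_le (LinearMap.ker_le_comap _) ?_
  simpa [Nat.sub_add_cancel (show m ≤ n by omega)] using F.le_comap_lsmul_of_mem_pow hx (n - m)

/-- Let `R` be Noetherian, `I` an ideal, `M` an `I`-filtered module,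
and `x ∈ Iᵐ` a superficial element for `M` of order `m` (with constant `c`).  Then for
all sufficiently large `n`, `(Mₙ :_M x) = (0 :_M x) + M_{n-m}`. -/
theorem superficial_colon_eq {R M : Type u} [CommRing R] [IsNoetherianRing R]
    [AddCommGroup M] [Module R M] [Module.Finite R M]
    (I : Ideal R) (F : I.Filtration M) (hF0 : F.N 0 = ⊤) (hFG : F.submodule.FG)
    (m : ℕ) (hm : 1 ≤ m) (x : R) (hx : x ∈ I ^ m) (c : ℕ)
    (hsup : ∀ n : ℕ, c ≤ n →
      Submodule.comap (LinearMap.lsmul R M x) (F.N (n + m)) ⊓ F.N c = F.N n) :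
    ∃ N₀ : ℕ, ∀ n : ℕ, N₀ ≤ n →
      Submodule.comap (LinearMap.lsmul R M x) (F.N n) =
        LinearMap.ker (LinearMap.lsmul R M x) ⊔ F.N (n - m) :=
  superficial_colon_eq_general I F hF0 hFG m x hx c hsup
end

section
/- Let $R$ be a Noetherian local ring, $P$ a prime ideal of $R$, and suppose that $R/P$ is Cohen-Macaulay and that $P^n/P^{n+1}$ is a projective (equivalently free) $R/P$-module for every $n \geq 0$. Then $R/P^n$ is a Cohen-Macaulay $R$-module for every $n \geq 1$. -/
open IsLocalRing

/-- The depth of a module `M` over a Noetherian local ring `(R, 𝔪)`: the supremum of the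
lengths of regular sequences on `M` consisting of elements of `𝔪`. -/
noncomputable def moduleDepth (R M : Type*) [CommRing R] [IsLocalRing R]
    [AddCommGroup M] [Module R M] : ℕ∞ :=
  sSup {n : ℕ∞ | ∃ rs : List R, (rs.length : ℕ∞) = n ∧
    (∀ r ∈ rs, r ∈ maximalIdeal R) ∧ RingTheory.Sequence.IsRegular M rs}

/-- The (Krull) dimension of a module: the Krull dimension of `R ⧸ ann M`. -/
noncomputable def moduleDim (R M : Type*) [CommRing R]
    [AddCommGroup M] [Module R M] : WithBot ℕ∞ :=
  ringKrullDim (R ⧸ Module.annihilator R M)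

/-- A finitely generated module over a Noetherian local ring is Cohen–Macaulay if its
depth equals its dimension. -/
def IsCohenMacaulayModule (R M : Type*) [CommRing R] [IsLocalRing R]
    [AddCommGroup M] [Module R M] : Prop :=
  (moduleDepth R M : WithBot ℕ∞) = moduleDim R M

/-!
`R ⧸ P ^ n` is an iterated extension of the pieces `P ^ i ⧸ P ^ (i + 1) ≅ (R ⧸ P) ^ k`. An element
regular on `R ⧸ P` is regular on every piece and on every quotient of the filtration, so reducing
modulo it keeps the short exact sequences exact; hence `R ⧸ P`-regular sequences are
`R ⧸ P ^ n`-regular. Conversely, an `R ⧸ P ^ n`-regular element is regular on the bottom piece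
`P ^ (n - 1) ⧸ P ^ n`, hence on `R ⧸ P` once that piece is nonzero, which may be assumed since
otherwise `R ⧸ P ^ n = R ⧸ P ^ (n - 1)`. So `R ⧸ P ^ n` and `R ⧸ P` have the same depth, and they
have the same dimension because `P ^ n` and `P` have the same radical.
-/

open Function RingTheory.Sequence

universe w

namespace QuotSMulTop

variable {R : Type*} [CommRing R] (r : R)

noncomputable def piEquiv {ι : Type*} [Fintype ι] [DecidableEq ι] (N : ι → Type*)
    [∀ i, AddCommGroup (N i)] [∀ i, Module R (N i)] :
    QuotSMulTop r (∀ i, N i) ≃ₗ[R] ∀ i, QuotSMulTop r (N i) :=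
  equivQuotTensor r _ ≪≫ₗ TensorProduct.piRight R R _ N ≪≫ₗ
    LinearEquiv.piCongrRight fun i => (equivQuotTensor r (N i)).symm

variable {r} {M M' M'' : Type*} [AddCommGroup M] [Module R M] [AddCommGroup M'] [Module R M']
  [AddCommGroup M''] [Module R M'']

theorem map_injective_of_exact {f : M →ₗ[R] M'} {g : M' →ₗ[R] M''} (hf : Injective f)
    (hfg : Exact f g) (hr : IsSMulRegular M'' r) : Injective (map r f) := by
  have h := map_first_exact_on_four_term_exact_of_isSMulRegular_last
    ((LinearMap.exact_zero_iff_injective PUnit f).mpr hf) hfg hr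
  rwa [map_zero, LinearMap.exact_zero_iff_injective] at h

end QuotSMulTop

theorem IsSMulRegular.of_pi {R M ι : Type*} [SMul R M] [Nonempty ι] {r : R}
    (h : IsSMulRegular (ι → M) r) : IsSMulRegular M r := fun x y hxy =>
  congrFun (h (funext fun _ => hxy : r • const ι x = r • const ι y)) (Classical.arbitrary ι)

namespace Submodule

variable {R M : Type*} [Ring R] [AddCommGroup M] [Module R M] {p q : Submodule R M}

theorem injective_mapQ_subtype :
    Injective (mapQ (p.comap q.subtype) p q.subtype le_rfl) := by
  rw [← LinearMap.ker_eq_bot, ker_mapQ, mkQ_map_self]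

theorem exact_mapQ_subtype_factor (h : p ≤ q) :
    Exact (mapQ (p.comap q.subtype) p q.subtype le_rfl) (factor h) := by
  rw [LinearMap.exact_iff, ker_mapQ, range_mapQ, range_subtype, comap_id]

end Submodule

inductive HasFiltrationBySums (R : Type*) [CommRing R] (N : Type*) [AddCommGroup N]
    [Module R N] : (M : Type w) → [AddCommGroup M] → [Module R M] → Prop
  | of_subsingleton {M : Type w} [AddCommGroup M] [Module R M] [Subsingleton M] :
      HasFiltrationBySums R N M
  | of_exact {X M Q : Type w} [AddCommGroup X] [Module R X] [AddCommGroup M] [Module R M]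
      [AddCommGroup Q] [Module R Q] {k : ℕ} (e : X ≃ₗ[R] (Fin k → N)) {f : X →ₗ[R] M}
      {g : M →ₗ[R] Q} (hf : Injective f) (hg : Surjective g) (hfg : Exact f g) :
      HasFiltrationBySums R N Q → HasFiltrationBySums R N M

namespace HasFiltrationBySums

variable {R N : Type*} [CommRing R] [AddCommGroup N] [Module R N] {r : R}
  {M : Type w} [AddCommGroup M] [Module R M]

theorem isSMulRegular (h : HasFiltrationBySums R N M) (hr : IsSMulRegular N r) :
    IsSMulRegular M r := by
  induction h with
  | of_subsingleton => exact fun x y _ => Subsingleton.elim x y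
  | of_exact e hf _ hfg _ ih =>
    exact isSMulRegular_of_range_eq_ker hf hfg.linearMap_ker_eq.symm
      ((e.isSMulRegular_congr r).mpr (.pi fun _ => hr)) ih

theorem quotSMulTop (h : HasFiltrationBySums R N M) (hr : IsSMulRegular N r) :
    HasFiltrationBySums R (QuotSMulTop r N) (QuotSMulTop r M) := by
  induction h with
  | of_subsingleton => exact of_subsingleton
  | of_exact e hf hg hfg hQ ih =>
    exact of_exact (QuotSMulTop.congr r e ≪≫ₗ QuotSMulTop.piEquiv r _)
      (QuotSMulTop.map_injective_of_exact hf hfg (hQ.isSMulRegular hr))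
      (QuotSMulTop.map_surjective r hg) (QuotSMulTop.map_exact r hfg hg) ih

theorem isWeaklyRegular (h : HasFiltrationBySums R N M) {rs : List R}
    (hrs : IsWeaklyRegular N rs) : IsWeaklyRegular M rs := by
  induction rs generalizing N M with
  | nil => exact .nil R M
  | cons r rs ih =>
    rw [isWeaklyRegular_cons_iff] at hrs ⊢
    exact ⟨h.isSMulRegular hrs.1, ih (h.quotSMulTop hrs.1) hrs.2⟩

end HasFiltrationBySums

theorem isWeaklyRegular_iff_of_exact {R N : Type*} [CommRing R] [AddCommGroup N] [Module R N]
    {X M Q : Type w} [AddCommGroup X] [Module R X] [AddCommGroup M] [Module R M]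
    [AddCommGroup Q] [Module R Q] {k : ℕ} (hk : 0 < k) (e : X ≃ₗ[R] (Fin k → N))
    {f : X →ₗ[R] M} {g : M →ₗ[R] Q} (hf : Injective f) (hg : Surjective g) (hfg : Exact f g)
    (hQ : HasFiltrationBySums R N Q) {rs : List R} :
    IsWeaklyRegular M rs ↔ IsWeaklyRegular N rs := by
  refine ⟨fun hrs => ?_, (HasFiltrationBySums.of_exact e hf hg hfg hQ).isWeaklyRegular⟩
  have : Nonempty (Fin k) := Fin.pos_iff_nonempty.mp hk
  induction rs generalizing N X M Q with
  | nil => exact .nil R N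
  | cons r rs ih =>
    rw [isWeaklyRegular_cons_iff] at hrs ⊢
    have hr : IsSMulRegular N r :=
      ((e.isSMulRegular_congr r).mp (hrs.1.of_injective f hf)).of_pi
    exact ⟨hr, ih (QuotSMulTop.congr r e ≪≫ₗ QuotSMulTop.piEquiv r _)
      (QuotSMulTop.map_injective_of_exact hf hfg (hQ.isSMulRegular hr))
      (QuotSMulTop.map_surjective r hg) (QuotSMulTop.map_exact r hfg hg) (hQ.quotSMulTop hr)
      hrs.2⟩

theorem moduleDepth_eq_of_isWeaklyRegular_iff {R M M' : Type*} [CommRing R] [IsLocalRing R]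
    [AddCommGroup M] [Module R M] [Nontrivial M] [Module.Finite R M]
    [AddCommGroup M'] [Module R M'] [Nontrivial M'] [Module.Finite R M']
    (h : ∀ rs : List R, (∀ r ∈ rs, r ∈ maximalIdeal R) →
      (IsWeaklyRegular M rs ↔ IsWeaklyRegular M' rs)) :
    moduleDepth R M = moduleDepth R M' := by
  refine congrArg sSup (Set.ext fun n => exists_congr fun rs =>
    and_congr_right fun _ => and_congr_right fun hrs => ?_)
  rw [isRegular_iff_isWeaklyRegular_of_subset_maximalIdeal hrs,
    isRegular_iff_isWeaklyRegular_of_subset_maximalIdeal hrs]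
  exact h rs hrs

section

variable {R : Type*} [CommRing R]

abbrev Ideal.powQuotPowSucc (I : Ideal R) (n : ℕ) : Type _ :=
  ↥(I ^ n) ⧸ Submodule.comap (I ^ n).subtype (I ^ (n + 1))

variable {P : Ideal R}

theorem hasFiltrationBySums_quotient_pow
    (hfree : ∀ n : ℕ, ∃ k : ℕ, Nonempty (P.powQuotPowSucc n ≃ₗ[R] (Fin k → R ⧸ P))) (n : ℕ) :
    HasFiltrationBySums R (R ⧸ P) (R ⧸ P ^ n) := by
  induction n with
  | zero =>
    rw [pow_zero, Ideal.one_eq_top]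
    exact .of_subsingleton
  | succ n ih =>
    obtain ⟨k, ⟨e⟩⟩ := hfree n
    exact .of_exact e Submodule.injective_mapQ_subtype (Submodule.factor_surjective _)
      (Submodule.exact_mapQ_subtype_factor (Ideal.pow_le_pow_right n.le_succ)) ih

theorem isWeaklyRegular_quotient_pow_iff
    (hfree : ∀ n : ℕ, ∃ k : ℕ, Nonempty (P.powQuotPowSucc n ≃ₗ[R] (Fin k → R ⧸ P)))
    {n : ℕ} (hn : n ≠ 0) {rs : List R} :
    IsWeaklyRegular (R ⧸ P ^ n) rs ↔ IsWeaklyRegular (R ⧸ P) rs := by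
  obtain ⟨n, rfl⟩ := Nat.exists_eq_succ_of_ne_zero hn
  induction n with
  | zero => rw [pow_one]
  | succ n ih =>
    by_cases hstable : P ^ (n + 1) ≤ P ^ (n + 2)
    · rw [(Ideal.pow_le_pow_right (n + 1).le_succ).antisymm hstable]
      exact ih n.succ_ne_zero
    obtain ⟨k, ⟨e⟩⟩ := hfree (n + 1)
    have hk : 0 < k := Nat.pos_of_ne_zero fun hk => hstable <| by
      subst hk
      have := e.injective.subsingleton
      exact Submodule.comap_subtype_eq_top.mp (Submodule.Quotient.subsingleton_iff.mp this)
    exact isWeaklyRegular_iff_of_exact hk e Submodule.injective_mapQ_subtype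
      (Submodule.factor_surjective _)
      (Submodule.exact_mapQ_subtype_factor (Ideal.pow_le_pow_right (n + 1).le_succ))
      (hasFiltrationBySums_quotient_pow hfree (n + 1))

theorem moduleDim_quotient_pow (I : Ideal R) {n : ℕ} (hn : n ≠ 0) :
    moduleDim R (R ⧸ I ^ n) = moduleDim R (R ⧸ I) := by
  rw [moduleDim, moduleDim, Ideal.annihilator_quotient, Ideal.annihilator_quotient,
    ringKrullDim_quotient, ringKrullDim_quotient, PrimeSpectrum.zeroLocus_pow I hn]

end

theorem quotient_power_cohenMacaulay_general {R : Type*} [CommRing R] [IsLocalRing R]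
    (P : Ideal R) (hP : P.IsPrime)
    (hCM : IsCohenMacaulayModule R (R ⧸ P))
    (hfree : ∀ n : ℕ, ∃ k : ℕ, Nonempty
      ((↥(P ^ n : Ideal R) ⧸
          Submodule.comap (P ^ n : Ideal R).subtype (P ^ (n + 1) : Ideal R)) ≃ₗ[R]
        (Fin k → R ⧸ P))) :
    ∀ n : ℕ, 1 ≤ n → IsCohenMacaulayModule R (R ⧸ P ^ n) := by
  intro n hn
  replace hn : n ≠ 0 := Nat.one_le_iff_ne_zero.mp hn
  have : Nontrivial (R ⧸ P) := Ideal.Quotient.nontrivial_iff.mpr hP.ne_top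
  have : Nontrivial (R ⧸ P ^ n) :=
    Ideal.Quotient.nontrivial_iff.mpr (ne_top_of_le_ne_top hP.ne_top (Ideal.pow_le_self hn))
  rw [IsCohenMacaulayModule, moduleDim_quotient_pow P hn,
    moduleDepth_eq_of_isWeaklyRegular_iff fun _ _ => isWeaklyRegular_quotient_pow_iff hfree hn]
  exact hCM

/-- Let `R` be a Noetherian local ring and `P` a prime ideal such that
`R/P` is Cohen–Macaulay and each `Pⁿ/Pⁿ⁺¹` is a projective — equivalently, free —
`R/P`-module (phrased as: `R`-linearly isomorphic to a finite direct sum of copies of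
`R/P`).  Then `R/Pⁿ` is a Cohen–Macaulay `R`-module for every `n ≥ 1`. -/
theorem quotient_power_cohenMacaulay {R : Type*} [CommRing R] [IsLocalRing R]
    [IsNoetherianRing R] (P : Ideal R) (hP : P.IsPrime)
    (hCM : IsCohenMacaulayModule R (R ⧸ P))
    (hfree : ∀ n : ℕ, ∃ k : ℕ, Nonempty
      ((↥(P ^ n : Ideal R) ⧸
          Submodule.comap (P ^ n : Ideal R).subtype (P ^ (n + 1) : Ideal R)) ≃ₗ[R]
        (Fin k → R ⧸ P))) :
    ∀ n : ℕ, 1 ≤ n → IsCohenMacaulayModule R (R ⧸ P ^ n) :=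
  quotient_power_cohenMacaulay_general P hP hCM hfree
end
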